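/- arXiv:2006.11173 — 4 statements merged into one kernel-verified Lean document; each statement's English description precedes it below -/
import Mathlib

section
/- Let n ≥ 2, let P = Q8 × C_{2^n}, and let Q be a subgroup of P of index 2. Then Q is isomorphic to C4 × C_{2^n}, to Q8 × C_{2^{n-1}}, or to C4 ⋊ C_{2^n}. -/
open Multiplicative QuaternionGroup

private lemma pow_mod_eq' {G : Type*} [Monoid G] {g : G} {m : ℕ} (hg : g ^ m = 1) (k : ℕ) :
    g ^ (k % m) = g ^ k := by
  conv_rhs => rw [← Nat.div_add_mod k m, pow_add, pow_mul, hg, one_pow, one_mul]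

/-- Monoid hom from `Multiplicative (ZMod m)` given an element with `g ^ m = 1`. -/
private def powZMod {G : Type*} [Monoid G] (m : ℕ) [NeZero m] (g : G) (hg : g ^ m = 1) :
    Multiplicative (ZMod m) →* G where
  toFun x := g ^ (x.toAdd.val)
  map_one' := by simp [ZMod.val_zero]
  map_mul' a b := by
    show g ^ ((a.toAdd + b.toAdd).val) = _
    rw [ZMod.val_add, pow_mod_eq' hg, pow_add]

private lemma powZMod_apply {G : Type*} [Monoid G] (m : ℕ) [NeZero m] (g : G) (hg : g ^ m = 1)
    (x : Multiplicative (ZMod m)) : powZMod m g hg x = g ^ (x.toAdd.val) := rfl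

private lemma ofAdd_one_pow {m : ℕ} (k : ℕ) :
    (ofAdd (1 : ZMod m)) ^ k = ofAdd ((k : ZMod m)) := by
  rw [← ofAdd_nsmul, nsmul_eq_mul, mul_one]

private lemma conj_pow_parity {G : Type*} [Group G] {g h : G} (hc : h * g * h⁻¹ = g⁻¹)
    (m k : ℕ) :
    h ^ m * g ^ k * (h ^ m)⁻¹ = if Even m then g ^ k else (g ^ k)⁻¹ := by
  have key : ∀ x : G, h * x * h⁻¹ = ((MulAut.conj h) x) := fun x => rfl
  have hk : h * g ^ k * h⁻¹ = (g ^ k)⁻¹ := by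
    rw [key, map_pow, ← key, hc, inv_pow]
  induction m with
  | zero => simp
  | succ m ih =>
    have : h ^ (m+1) * g ^ k * (h ^ (m+1))⁻¹ = h * (h ^ m * g ^ k * (h ^ m)⁻¹) * h⁻¹ := by
      rw [pow_succ']
      group
    rw [this, ih]
    rcases Nat.even_or_odd m with he | ho
    · rw [if_pos he, if_neg (by simp [Nat.even_add_one, he])]
      exact hk
    · have hne : ¬ Even m := Nat.not_even_iff_odd.2 ho
      rw [if_neg hne, if_pos (by simp [Nat.even_add_one, hne])]
      rw [show h * (g ^ k)⁻¹ * h⁻¹ = (h * g ^ k * h⁻¹)⁻¹ by group, hk, inv_inv]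

private lemma gpow_neg_val {G : Type*} [Group G] {g : G} (hg : g ^ 4 = 1) (v : ZMod 4) :
    g ^ ((-v).val) = (g ^ v.val)⁻¹ := by
  apply eq_inv_of_mul_eq_one_left
  rw [← pow_add, ← pow_mod_eq' hg, ← ZMod.val_add, neg_add_cancel, ZMod.val_zero, pow_zero]

private lemma natCast_val_self {m : ℕ} [NeZero m] (c : ZMod m) : ((c.val : ℕ) : ZMod m) = c :=
  ZMod.natCast_rightInverse c

section Cases

variable (n : ℕ) (Q : Subgroup (QuaternionGroup 2 × Multiplicative (ZMod (2 ^ n))))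

private lemma cardQ [NeZero (2 ^ n)] (hQ : Q.index = 2) : Nat.card Q = 2 ^ (n + 2) := by
  have h1 : Nat.card (QuaternionGroup 2 × Multiplicative (ZMod (2 ^ n))) = 2 ^ (n + 3) := by
    rw [Nat.card_prod, Nat.card_eq_fintype_card, QuaternionGroup.card,
      Nat.card_congr Multiplicative.toAdd, Nat.card_zmod]
    ring
  have h2 := Subgroup.card_mul_index Q
  rw [hQ, h1] at h2
  have : 2 ^ (n + 3) = 2 ^ (n + 2) * 2 := by ring
  omega

/-- all elements `(1, c)` lie in `Q` if `(1, ofAdd 1) ∈ Q`. -/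
private lemma mem_one_c [NeZero (2 ^ n)]
    (htQ : ((1 : QuaternionGroup 2), ofAdd (1 : ZMod (2 ^ n))) ∈ Q)
    (c : Multiplicative (ZMod (2 ^ n))) : ((1 : QuaternionGroup 2), c) ∈ Q := by
  have := Q.pow_mem htQ (c.toAdd.val)
  rwa [Prod.pow_mk, one_pow, ofAdd_one_pow, natCast_val_self, ofAdd_toAdd] at this

private lemma caseA [NeZero (2 ^ n)] (hQ : Q.index = 2)
    (g : QuaternionGroup 2) (hg4 : g ^ 4 = 1)
    (hinj : ∀ i j : ZMod 4, g ^ i.val = g ^ j.val → i = j)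
    (hgQ : (g, (1 : Multiplicative (ZMod (2 ^ n)))) ∈ Q)
    (htQ : ((1 : QuaternionGroup 2), ofAdd (1 : ZMod (2 ^ n))) ∈ Q) :
    Nonempty (Q ≃* Multiplicative (ZMod 4) × Multiplicative (ZMod (2 ^ n))) := by
  set f := (powZMod 4 g hg4).prodMap (MonoidHom.id (Multiplicative (ZMod (2 ^ n)))) with hf
  have hfapp : ∀ x c, f (x, c) = (g ^ (x.toAdd.val), c) := fun x c => rfl
  have hrange : ∀ k, f k ∈ Q := by
    rintro ⟨x, c⟩
    rw [hfapp]
    have h1 : (g ^ (x.toAdd.val), (1 : Multiplicative (ZMod (2 ^ n)))) ∈ Q := by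
      have := Q.pow_mem hgQ (x.toAdd.val)
      rwa [Prod.pow_mk, one_pow] at this
    have h2 := mem_one_c n Q htQ c
    have := Q.mul_mem h1 h2
    rwa [Prod.mk_mul_mk, mul_one, one_mul] at this
  have hfinj : Function.Injective f := by
    rintro ⟨x, c⟩ ⟨y, d⟩ h
    rw [hfapp, hfapp, Prod.mk.injEq] at h
    obtain ⟨h1, h2⟩ := h
    have := hinj _ _ h1
    exact Prod.ext (Multiplicative.toAdd.injective this) h2
  set f' := f.codRestrict Q hrange with hf'
  have hinj' : Function.Injective f' := fun a b hab =>
    hfinj (congrArg Subtype.val hab)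
  have hcard : Nat.card (Multiplicative (ZMod 4) × Multiplicative (ZMod (2 ^ n)))
      = Nat.card Q := by
    rw [cardQ n Q hQ, Nat.card_prod, Nat.card_congr Multiplicative.toAdd,
      Nat.card_congr Multiplicative.toAdd, Nat.card_zmod, Nat.card_zmod]
    ring
  have hbij : Function.Bijective f' :=
    (Nat.bijective_iff_injective_and_card f').mpr ⟨hinj', hcard⟩
  exact ⟨(MulEquiv.ofBijective f' hbij).symm⟩

private lemma caseB [NeZero (2 ^ n)] [NeZero (2 ^ (n - 1))] (hn : 1 ≤ n) (hQ : Q.index = 2)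
    (hall : ∀ g : QuaternionGroup 2, (g, (1 : Multiplicative (ZMod (2 ^ n)))) ∈ Q) :
    Nonempty (Q ≃* QuaternionGroup 2 × Multiplicative (ZMod (2 ^ (n - 1)))) := by
  have hsum : 2 ^ (n - 1) * 2 = 2 ^ n := by
    rw [← pow_succ]
    congr 1
    omega
  have h2 : (ofAdd (2 : ZMod (2 ^ n))) ^ (2 ^ (n - 1)) = 1 := by
    rw [← ofAdd_nsmul, nsmul_eq_mul]
    have : ((2 ^ (n - 1) : ℕ) : ZMod (2 ^ n)) * 2 = ((2 ^ (n - 1) * 2 : ℕ) : ZMod (2 ^ n)) := by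
      push_cast; ring
    rw [this, hsum, ZMod.natCast_self, ofAdd_zero]
  set f₂ := powZMod (2 ^ (n - 1)) (ofAdd (2 : ZMod (2 ^ n))) h2 with hf₂
  set f := (MonoidHom.id (QuaternionGroup 2)).prodMap f₂ with hf
  have hf₂app : ∀ c : Multiplicative (ZMod (2 ^ (n - 1))),
      f₂ c = ofAdd (((2 * c.toAdd.val : ℕ) : ZMod (2 ^ n))) := by
    intro c
    rw [hf₂, powZMod_apply, ← ofAdd_nsmul, nsmul_eq_mul]
    congr 1
    push_cast; ring
  have hrange : ∀ k, f k ∈ Q := by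
    rintro ⟨g, c⟩
    have hsq : ((1 : QuaternionGroup 2), ofAdd (2 : ZMod (2 ^ n))) ∈ Q := by
      have := Subgroup.sq_mem_of_index_two hQ ((1 : QuaternionGroup 2), ofAdd (1 : ZMod (2 ^ n)))
      rwa [Prod.pow_mk, one_pow, ofAdd_one_pow, Nat.cast_ofNat] at this
    have h1 : ((1 : QuaternionGroup 2), f₂ c) ∈ Q := by
      have := Q.pow_mem hsq (c.toAdd.val)
      rw [Prod.pow_mk, one_pow, ← ofAdd_nsmul, nsmul_eq_mul] at this
      rw [hf₂app]
      convert this using 3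
      push_cast; ring
    have := Q.mul_mem (hall g) h1
    rwa [Prod.mk_mul_mk, mul_one, one_mul] at this
  have hfinj : Function.Injective f := by
    have hinj₂ : Function.Injective f₂ := by
      intro c d h
      rw [hf₂app, hf₂app] at h
      have h' : ((2 * c.toAdd.val : ℕ) : ZMod (2 ^ n)) = ((2 * d.toAdd.val : ℕ) : ZMod (2 ^ n)) :=
        by exact ofAdd.injective h
      rw [ZMod.natCast_eq_natCast_iff] at h'
      have hmod : (2 * c.toAdd.val) % (2 * 2 ^ (n - 1)) = (2 * d.toAdd.val) % (2 * 2 ^ (n - 1)) := by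
        rwa [show 2 * 2 ^ (n - 1) = 2 ^ n by omega]
      rw [Nat.mul_mod_mul_left, Nat.mul_mod_mul_left] at hmod
      have := Nat.eq_of_mul_eq_mul_left (by norm_num) hmod
      rw [Nat.mod_eq_of_lt (ZMod.val_lt _), Nat.mod_eq_of_lt (ZMod.val_lt _)] at this
      apply Multiplicative.toAdd.injective
      have := congrArg (fun k : ℕ => ((k : ℕ) : ZMod (2 ^ (n - 1)))) this
      simpa [natCast_val_self] using this
    rintro ⟨g, c⟩ ⟨g', c'⟩ h
    rw [Prod.mk.injEq] at h
    exact Prod.ext h.1 (hinj₂ h.2)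
  set f' := f.codRestrict Q hrange with hf'
  have hinj' : Function.Injective f' := fun a b hab => hfinj (congrArg Subtype.val hab)
  have hcard : Nat.card (QuaternionGroup 2 × Multiplicative (ZMod (2 ^ (n - 1))))
      = Nat.card Q := by
    rw [cardQ n Q hQ, Nat.card_prod, Nat.card_eq_fintype_card, QuaternionGroup.card,
      Nat.card_congr Multiplicative.toAdd, Nat.card_zmod]
    have : 2 ^ (n + 2) = 4 * 2 * 2 ^ (n - 1) := by
      rw [show (4 : ℕ) * 2 = 2 ^ 3 by norm_num, ← pow_add]
      congr 1
      omega
    omega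
  have hbij : Function.Bijective f' :=
    (Nat.bijective_iff_injective_and_card f').mpr ⟨hinj', hcard⟩
  exact ⟨(MulEquiv.ofBijective f' hbij).symm⟩

private lemma caseC [NeZero (2 ^ n)] (hn : 2 ≤ n) (hQ : Q.index = 2)
    (g h : QuaternionGroup 2) (hg4 : g ^ 4 = 1) (hh4 : h ^ 4 = 1)
    (hconj : h * g * h⁻¹ = g⁻¹)
    (hinj : ∀ i j : ZMod 4, g ^ i.val = g ^ j.val → i = j)
    (hgQ : (g, (1 : Multiplicative (ZMod (2 ^ n)))) ∈ Q)
    (hhQ : (h, ofAdd (1 : ZMod (2 ^ n))) ∈ Q) :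
    ∃ φ : Multiplicative (ZMod (2 ^ n)) →* MulAut (Multiplicative (ZMod 4)),
      φ (Multiplicative.ofAdd (1 : ZMod (2 ^ n))) = MulEquiv.inv (Multiplicative (ZMod 4)) ∧
      Nonempty (Q ≃* (Multiplicative (ZMod 4)) ⋊[φ] (Multiplicative (ZMod (2 ^ n)))) := by
  haveI : Fact (1 < 2 ^ n) := ⟨by have : 2 ^ 1 ≤ 2 ^ n := Nat.pow_le_pow_right (by norm_num) (by omega); omega⟩
  set σ := MulEquiv.inv (Multiplicative (ZMod 4)) with hσ
  have hσ2 : σ ^ 2 = 1 := by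
    ext x
    rw [pow_two]
    show σ (σ x) = x
    simp [hσ]
  have hσeven : ∀ m : ℕ, Even m → σ ^ m = 1 := by
    rintro m ⟨k, rfl⟩
    rw [show k + k = 2 * k by ring, pow_mul, hσ2, one_pow]
  have h2n : 2 ^ n = 2 ^ (n - 1) + 2 ^ (n - 1) := by
    have : 2 ^ n = 2 * 2 ^ (n - 1) := by rw [← pow_succ']; congr 1; omega
    omega
  have hσpow : σ ^ (2 ^ n) = 1 := hσeven _ ⟨2 ^ (n - 1), h2n⟩
  refine ⟨powZMod (2 ^ n) σ hσpow, ?_, ?_⟩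
  · rw [powZMod_apply, toAdd_ofAdd, ZMod.val_one, pow_one]
  set φ := powZMod (2 ^ n) σ hσpow with hφ
  have hφapp : ∀ (c : Multiplicative (ZMod (2 ^ n))) (x : Multiplicative (ZMod 4)),
      φ c x = if Even (c.toAdd.val) then x else x⁻¹ := by
    intro c x
    rw [hφ, powZMod_apply]
    rcases Nat.even_or_odd (c.toAdd.val) with he | ho
    · rw [if_pos he, hσeven _ he]
      rfl
    · rw [if_neg (Nat.not_even_iff_odd.2 ho)]
      obtain ⟨k, hk⟩ := ho
      rw [hk, pow_succ, hσeven (2 * k) ⟨k, by ring⟩, one_mul]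
      rfl
  -- the two homs
  set f₁ := (powZMod 4 g hg4).prod (1 : Multiplicative (ZMod 4) →* Multiplicative (ZMod (2 ^ n)))
    with hf₁
  have hf₁app : ∀ x : Multiplicative (ZMod 4),
      f₁ x = (g ^ (x.toAdd.val), (1 : Multiplicative (ZMod (2 ^ n)))) := fun x => rfl
  have hp2n : ((h, ofAdd (1 : ZMod (2 ^ n)))) ^ (2 ^ n) = 1 := by
    rw [Prod.pow_mk, ofAdd_one_pow]
    have e1 : h ^ (2 ^ n) = 1 := by
      rw [show 2 ^ n = 4 * 2 ^ (n - 2) by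
        rw [show (4:ℕ) = 2 ^ 2 by norm_num, ← pow_add]; congr 1; omega]
      rw [pow_mul, hh4, one_pow]
    have e2 : (((2 ^ n : ℕ) : ZMod (2 ^ n))) = 0 := by
      exact_mod_cast ZMod.natCast_self (2 ^ n)
    rw [e1, e2, ofAdd_zero]
    rfl
  set f₂ := powZMod (2 ^ n) ((h, ofAdd (1 : ZMod (2 ^ n)))) hp2n with hf₂
  have hf₂app : ∀ c : Multiplicative (ZMod (2 ^ n)),
      f₂ c = (h ^ (c.toAdd.val), c) := by
    intro c
    rw [hf₂, powZMod_apply, Prod.pow_mk, ofAdd_one_pow, natCast_val_self, ofAdd_toAdd]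
  have compat : ∀ c, f₁.comp (φ c).toMonoidHom
      = (MulAut.conj (f₂ c)).toMonoidHom.comp f₁ := by
    intro c
    refine MonoidHom.ext fun x => ?_
    simp only [MonoidHom.comp_apply, MulEquiv.coe_toMonoidHom, MulAut.conj_apply]
    rw [hφapp, hf₂app, hf₁app x, hf₁app]
    have hconjP : (h ^ (c.toAdd.val), c) * (g ^ (x.toAdd.val), 1) * (h ^ (c.toAdd.val), c)⁻¹
        = (h ^ (c.toAdd.val) * g ^ (x.toAdd.val) * (h ^ (c.toAdd.val))⁻¹, 1) := by
      rw [Prod.inv_mk, Prod.mk_mul_mk, Prod.mk_mul_mk]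
      congr 1
      group
    rw [hconjP, conj_pow_parity hconj]
    by_cases he : Even (c.toAdd.val)
    · rw [if_pos he, if_pos he]
    · rw [if_neg he, if_neg he, Prod.mk.injEq]
      refine ⟨?_, rfl⟩
      show g ^ ((-x.toAdd).val) = (g ^ (x.toAdd.val))⁻¹
      exact gpow_neg_val hg4 _
  set F := SemidirectProduct.lift f₁ f₂ compat with hF
  have hFapp : ∀ v : (Multiplicative (ZMod 4)) ⋊[φ] (Multiplicative (ZMod (2 ^ n))),
      F v = f₁ v.left * f₂ v.right := fun v => rfl
  have hrange : ∀ v, F v ∈ Q := by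
    intro v
    rw [hFapp]
    apply Q.mul_mem
    · have := Q.pow_mem hgQ (v.left.toAdd.val)
      rwa [Prod.pow_mk, one_pow, ← hf₁app] at this
    · have := Q.pow_mem hhQ (v.right.toAdd.val)
      rwa [← powZMod_apply _ _ hp2n, ← hf₂] at this
  have hFinj : Function.Injective F := by
    rw [injective_iff_map_eq_one]
    rintro ⟨x, c⟩ hv
    rw [hFapp] at hv
    simp only at hv
    rw [hf₁app, hf₂app, Prod.mk_mul_mk, one_mul] at hv
    rw [Prod.ext_iff] at hv
    obtain ⟨hv1, hv2⟩ := hv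
    have hc : c = 1 := hv2
    subst hc
    have hval : (toAdd (1 : Multiplicative (ZMod (2 ^ n)))).val = 0 := by
      rw [toAdd_one, ZMod.val_zero]
    rw [hval, pow_zero, mul_one] at hv1
    have hx : x = 1 := by
      have := hinj x.toAdd 0 (by rw [ZMod.val_zero, pow_zero]; exact hv1)
      exact Multiplicative.toAdd.injective this
    subst hx
    rfl
  set F' := F.codRestrict Q hrange with hF'
  have hinj' : Function.Injective F' := fun a b hab => hFinj (congrArg Subtype.val hab)
  have hcard : Nat.card ((Multiplicative (ZMod 4)) ⋊[φ] (Multiplicative (ZMod (2 ^ n))))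
      = Nat.card Q := by
    have hequiv : (Multiplicative (ZMod 4)) ⋊[φ] (Multiplicative (ZMod (2 ^ n)))
        ≃ (Multiplicative (ZMod 4)) × (Multiplicative (ZMod (2 ^ n))) :=
      ⟨fun v => (v.left, v.right), fun p => ⟨p.1, p.2⟩, fun v => rfl, fun p => rfl⟩
    rw [Nat.card_congr hequiv, cardQ n Q hQ, Nat.card_prod,
      Nat.card_congr Multiplicative.toAdd, Nat.card_congr Multiplicative.toAdd,
      Nat.card_zmod, Nat.card_zmod]
    ring
  have hbij : Function.Bijective F' :=
    (Nat.bijective_iff_injective_and_card F').mpr ⟨hinj', hcard⟩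
  exact ⟨(MulEquiv.ofBijective F' hbij).symm⟩


end Cases

private lemma quat_decomp : ∀ g : QuaternionGroup 2, ∃ i : ZMod 4, ∃ b : Bool,
    g = (a 1) ^ i.val * (xa 0) ^ (cond b 1 0) := by decide

section Main
variable (n : ℕ) (Q : Subgroup (QuaternionGroup 2 × Multiplicative (ZMod (2 ^ n))))

private lemma hall_of [NeZero (2 ^ n)]
    (hp : ((a 1 : QuaternionGroup 2), (1 : Multiplicative (ZMod (2 ^ n)))) ∈ Q)
    (hq : ((xa 0 : QuaternionGroup 2), (1 : Multiplicative (ZMod (2 ^ n)))) ∈ Q) :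
    ∀ g : QuaternionGroup 2, (g, (1 : Multiplicative (ZMod (2 ^ n)))) ∈ Q := by
  intro g
  obtain ⟨i, b, hgi⟩ := quat_decomp g
  have h1 := Q.pow_mem hp i.val
  have h2 := Q.pow_mem hq (cond b 1 0)
  have h3 := Q.mul_mem h1 h2
  rw [Prod.pow_mk, Prod.pow_mk, one_pow, one_pow, Prod.mk_mul_mk, one_mul] at h3
  rwa [← hgi] at h3

end Main

/-- Let `n ≥ 2`, `P = Q8 × C_{2^n}`, and `Q ≤ P` of index 2. Then `Q` is
isomorphic to `C4 × C_{2^n}`, to `Q8 × C_{2^(n-1)}`, or to the semidirect product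
`C4 ⋊ C_{2^n}` in which a generator of `C_{2^n}` acts on `C4` by inversion. -/
theorem stmt2 (n : ℕ) (hn : 2 ≤ n)
    (Q : Subgroup (QuaternionGroup 2 × Multiplicative (ZMod (2 ^ n))))
    (hQ : Q.index = 2) :
    Nonempty (Q ≃* Multiplicative (ZMod 4) × Multiplicative (ZMod (2 ^ n))) ∨
    Nonempty (Q ≃* QuaternionGroup 2 × Multiplicative (ZMod (2 ^ (n - 1)))) ∨
    (∃ φ : Multiplicative (ZMod (2 ^ n)) →* MulAut (Multiplicative (ZMod 4)),
      φ (Multiplicative.ofAdd (1 : ZMod (2 ^ n))) = MulEquiv.inv (Multiplicative (ZMod 4)) ∧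
      Nonempty (Q ≃* (Multiplicative (ZMod 4)) ⋊[φ] (Multiplicative (ZMod (2 ^ n))))) := by
  haveI : NeZero (2 ^ n) := ⟨by positivity⟩
  haveI : NeZero (2 ^ (n - 1)) := ⟨by positivity⟩
  set p := ((a 1 : QuaternionGroup 2), (1 : Multiplicative (ZMod (2 ^ n)))) with hpdef
  set q := ((xa 0 : QuaternionGroup 2), (1 : Multiplicative (ZMod (2 ^ n)))) with hqdef
  set t := ((1 : QuaternionGroup 2), ofAdd (1 : ZMod (2 ^ n))) with htdef
  have hmul : ∀ x y, x ∉ Q → y ∉ Q → x * y ∈ Q := fun x y hx hy =>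
    (Subgroup.mul_mem_iff_of_index_two hQ).2 (iff_of_false hx hy)
  by_cases ht : t ∈ Q
  · by_cases hp : p ∈ Q
    · by_cases hq' : q ∈ Q
      · exfalso
        have hall := hall_of n Q hp hq'
        have htop : ∀ x, x ∈ Q := by
          rintro ⟨g, c⟩
          have := Q.mul_mem (hall g) (mem_one_c n Q ht c)
          rwa [Prod.mk_mul_mk, mul_one, one_mul] at this
        rw [(Subgroup.eq_top_iff' Q).2 htop, Subgroup.index_top] at hQ
        norm_num at hQ
      · exact Or.inl (caseA n Q hQ (a 1) (by decide)
          (by decide) hp ht)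
    · by_cases hq' : q ∈ Q
      · exact Or.inl (caseA n Q hQ (xa 0) (by decide) (by decide) hq' ht)
      · have hpq := hmul p q hp hq'
        rw [hpdef, hqdef, Prod.mk_mul_mk, mul_one] at hpq
        exact Or.inl (caseA n Q hQ (a 1 * xa 0) (by decide) (by decide) hpq ht)
  · by_cases hp : p ∈ Q
    · by_cases hq' : q ∈ Q
      · exact Or.inr (Or.inl (caseB n Q (by omega) hQ (hall_of n Q hp hq')))
      · have hqt := hmul q t hq' ht
        rw [hqdef, htdef, Prod.mk_mul_mk, mul_one, one_mul] at hqt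
        exact Or.inr (Or.inr (caseC n Q hn hQ (a 1) (xa 0) (by decide) (by decide)
          (by decide) (by decide) hp hqt))
    · have hpt := hmul p t hp ht
      rw [hpdef, htdef, Prod.mk_mul_mk, mul_one, one_mul] at hpt
      by_cases hq' : q ∈ Q
      · exact Or.inr (Or.inr (caseC n Q hn hQ (xa 0) (a 1) (by decide) (by decide)
          (by decide) (by decide) hq' hpt))
      · have hpq := hmul p q hp hq'
        rw [hpdef, hqdef, Prod.mk_mul_mk, mul_one] at hpq
        exact Or.inr (Or.inr (caseC n Q hn hQ (a 1 * xa 0) (a 1) (by decide) (by decide)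
          (by decide) (by decide) hpq hpt))
end

section
/- Let n, m be natural numbers with n ≠ m. Then the automorphism group Aut(C_{2^n} × C_{2^m}) of the abelian group C_{2^n} × C_{2^m} is a 2-group, i.e., its order is a power of 2. -/
private lemma cast_val_self {K : ℕ} [NeZero K] (x : ZMod K) : ((x.val : ℕ) : ZMod K) = x := by
  simp [ZMod.natCast_val, ZMod.cast_id]

private lemma even_elt {K : ℕ} [NeZero K] (x : ZMod K) (hx : 2 ∣ x.val) :
    ∃ t : ZMod K, x = 2 * t := by
  obtain ⟨t, ht⟩ := hx
  exact ⟨(t : ZMod K), by rw [← cast_val_self x, ht]; push_cast; ring⟩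

private lemma odd_elt {K : ℕ} [NeZero K] (x : ZMod K) (hx : ¬ 2 ∣ x.val) :
    ∃ t : ZMod K, x = 2 * t + 1 := by
  obtain ⟨t, ht⟩ := Nat.odd_iff.mpr (Nat.two_dvd_ne_zero.mp hx)
  exact ⟨(t : ZMod K), by rw [← cast_val_self x, ht]; push_cast; ring⟩

/-- in ZMod 2^m, a 2^n-torsion element has even val, if n < m -/
private lemma torsion_even {n m : ℕ} (h : n < m) (c : ZMod (2^m))
    (hc : ((2^n : ℕ) : ZMod (2^m)) * c = 0) : 2 ∣ c.val := by
  haveI : NeZero ((2:ℕ)^m) := inferInstance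
  have h1 : ((2^n * c.val : ℕ) : ZMod (2^m)) = 0 := by
    push_cast [cast_val_self]
    exact_mod_cast hc
  have h2 : (2:ℕ)^m ∣ 2^n * c.val := (ZMod.natCast_eq_zero_iff _ _).mp h1
  have h3 : (2:ℕ)^n * 2 ∣ 2^n * c.val := by
    refine dvd_trans ?_ h2
    rw [← pow_succ]
    exact pow_dvd_pow 2 h
  exact (mul_dvd_mul_iff_left (a := (2:ℕ)^n) (pow_ne_zero _ two_ne_zero)).mp h3

/-- 1 is not even in ZMod 2^k for k ≥ 1 -/
private lemma one_ne_even {k : ℕ} (hk : 1 ≤ k) (z : ZMod (2^k)) : (1 : ZMod (2^k)) ≠ 2 * z := by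
  intro hEq
  have hdvd : (2:ℕ) ∣ 2^k := dvd_pow_self 2 (by omega)
  have := congrArg (ZMod.castHom hdvd (ZMod 2)) hEq
  rw [map_one, map_mul, map_ofNat] at this
  have h2 : (2 : ZMod 2) = 0 := by decide
  rw [h2, zero_mul] at this
  exact one_ne_zero this

private instance addAutMulGroup {A : Type*} [Add A] : Group (AddAut A) where
  mul g h := AddEquiv.trans h g
  one := AddEquiv.refl _
  inv := AddEquiv.symm
  mul_assoc _ _ _ := rfl
  one_mul _ := rfl
  mul_one _ := rfl
  inv_mul_cancel := AddEquiv.self_trans_symm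

section Main
variable {n m : ℕ}

private lemma base (h : n < m) (u : AddAut (ZMod (2^n) × ZMod (2^m))) :
    ∀ x, ∃ y, u (u x) = x + 2 • y := by
  set e1 : ZMod (2^n) × ZMod (2^m) := (1, 0) with he1
  set e2 : ZMod (2^n) × ZMod (2^m) := (0, 1) with he2
  have dec : ∀ x : ZMod (2^n) × ZMod (2^m), x = x.1.val • e1 + x.2.val • e2 := by
    intro x
    apply Prod.ext <;> simp [he1, he2, nsmul_eq_mul, cast_val_self]
  have happ : ∀ x : ZMod (2^n) × ZMod (2^m), u x = x.1.val • u e1 + x.2.val • u e2 := by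
    intro x
    conv_lhs => rw [dec x]
    rw [map_add, map_nsmul, map_nsmul]
  -- torsion of e1 and its images
  have he1tor : (2^n : ℕ) • e1 = (0 : ZMod (2^n) × ZMod (2^m)) := by
    apply Prod.ext <;> simp [he1, nsmul_eq_mul]
  have htor : ∀ v : AddAut (ZMod (2^n) × ZMod (2^m)), 2 ∣ (v e1).2.val := by
    intro v
    have h0 : (2^n : ℕ) • v e1 = 0 := by rw [← map_nsmul, he1tor, map_zero]
    have h2 : ((2^n : ℕ) : ZMod (2^m)) * (v e1).2 = 0 := by
      have := congrArg Prod.snd h0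
      simpa [nsmul_eq_mul] using this
    exact torsion_even h _ h2
  -- the (1,1) entry is odd (when n ≥ 1)
  have ha : 1 ≤ n → ¬ 2 ∣ (u e1).1.val := by
    intro hn hpar
    obtain ⟨a₀, ha₀⟩ := even_elt _ hpar
    obtain ⟨w, hw⟩ := htor u.symm
    have hs : u (u.symm e1) = e1 := u.apply_symm_apply e1
    rw [happ] at hs
    have h1 := congrArg Prod.fst hs
    simp only [Prod.fst_add, Prod.smul_fst] at h1
    simp only [nsmul_eq_mul, he1] at h1
    rw [cast_val_self, ha₀, hw] at h1
    push_cast at h1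
    exact one_ne_even hn ((u.symm e1).1 * a₀ + (w : ZMod (2^n)) * (u e2).1)
      (by rw [← h1]; ring)
  -- the (2,2) entry is odd
  obtain ⟨c₀, hc₀⟩ : ∃ c₀, (u e1).2 = 2 * c₀ := even_elt _ (htor u)
  have hd : ¬ 2 ∣ (u e2).2.val := by
    intro hpar
    obtain ⟨d₀, hd₀⟩ := even_elt _ hpar
    have hs : u (u.symm e2) = e2 := u.apply_symm_apply e2
    rw [happ] at hs
    have h1 := congrArg Prod.snd hs
    simp only [Prod.snd_add, Prod.smul_snd] at h1
    simp only [nsmul_eq_mul, he2] at h1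
    rw [cast_val_self, hc₀, hd₀] at h1
    exact one_ne_even (by omega) (((u.symm e2).1.val : ZMod (2^m)) * c₀ + (u.symm e2).2 * d₀)
      (by rw [← h1]; ring)
  -- generator 1
  have G1 : ∃ y, u (u e1) = e1 + 2 • y := by
    obtain ⟨y1, hy1⟩ : ∃ y1, ((u e1).1.val : ZMod (2^n)) * (u e1).1
        + (((u e1).2.val : ℕ) : ZMod (2^n)) * (u e2).1 = 1 + 2 * y1 := by
      rcases Nat.eq_zero_or_pos n with hn | hn
      · subst hn
        haveI : Subsingleton (ZMod (2^0)) := by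
          rw [pow_zero]; infer_instance
        exact ⟨0, Subsingleton.elim _ _⟩
      · obtain ⟨a₀, ha₀⟩ := odd_elt _ (ha hn)
        obtain ⟨w, hw⟩ := htor u
        refine ⟨2*a₀*a₀ + 2*a₀ + (w : ZMod (2^n)) * (u e2).1, ?_⟩
        rw [cast_val_self, ha₀, hw]
        push_cast
        ring
    obtain ⟨y2, hy2⟩ : ∃ y2, (((u e1).1.val : ℕ) : ZMod (2^m)) * (u e1).2
        + ((u e1).2.val : ZMod (2^m)) * (u e2).2 = 0 + 2 * y2 := by
      refine ⟨((u e1).1.val : ZMod (2^m)) * c₀ + c₀ * (u e2).2, ?_⟩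
      rw [cast_val_self, hc₀]
      ring
    refine ⟨(y1, y2), ?_⟩
    rw [happ (u e1)]
    apply Prod.ext
    · simp only [Prod.fst_add, Prod.smul_fst]
      simpa [he1, nsmul_eq_mul] using hy1
    · simp only [Prod.snd_add, Prod.smul_snd]
      simpa [he1, nsmul_eq_mul] using hy2
  -- generator 2
  have G2 : ∃ y, u (u e2) = e2 + 2 • y := by
    obtain ⟨q, hq⟩ : ∃ q : ℕ, (u e2).2.val = 2 * q + 1 := by
      rcases Nat.even_or_odd ((u e2).2.val) with hev | hod
      · exact absurd hev.two_dvd hd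
      · obtain ⟨q, hq⟩ := hod
        exact ⟨q, by omega⟩
    obtain ⟨y1, hy1⟩ : ∃ y1, ((u e2).1.val : ZMod (2^n)) * (u e1).1
        + (((u e2).2.val : ℕ) : ZMod (2^n)) * (u e2).1 = 0 + 2 * y1 := by
      rcases Nat.eq_zero_or_pos n with hn | hn
      · subst hn
        haveI : Subsingleton (ZMod (2^0)) := by
          rw [pow_zero]; infer_instance
        exact ⟨0, Subsingleton.elim _ _⟩
      · obtain ⟨a₀, ha₀⟩ := odd_elt _ (ha hn)
        refine ⟨(u e2).1 * a₀ + (q : ZMod (2^n)) * (u e2).1 + (u e2).1, ?_⟩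
        rw [cast_val_self, ha₀, hq]
        push_cast
        ring
    obtain ⟨y2, hy2⟩ : ∃ y2, (((u e2).1.val : ℕ) : ZMod (2^m)) * (u e1).2
        + ((u e2).2.val : ZMod (2^m)) * (u e2).2 = 1 + 2 * y2 := by
      obtain ⟨d₀, hd₀⟩ := odd_elt _ hd
      refine ⟨((u e2).1.val : ZMod (2^m)) * c₀ + 2*d₀*d₀ + 2*d₀, ?_⟩
      rw [cast_val_self, hc₀, hd₀]
      ring
    refine ⟨(y1, y2), ?_⟩
    rw [happ (u e2)]
    apply Prod.ext
    · simp only [Prod.fst_add, Prod.smul_fst]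
      simpa [he2, nsmul_eq_mul] using hy1
    · simp only [Prod.snd_add, Prod.smul_snd]
      simpa [he2, nsmul_eq_mul] using hy2
  -- assemble
  intro x
  obtain ⟨z1, hz1⟩ := G1
  obtain ⟨z2, hz2⟩ := G2
  obtain ⟨p, q, hx⟩ : ∃ p q : ℕ, x = p • e1 + q • e2 := ⟨_, _, dec x⟩
  subst hx
  refine ⟨p • z1 + q • z2, ?_⟩
  rw [map_add, map_nsmul, map_nsmul, map_add, map_nsmul, map_nsmul, hz1, hz2]
  module

private lemma pow_eq_one (h : n < m) (u : AddAut (ZMod (2^n) × ZMod (2^m))) :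
    u ^ (2^m) = 1 := by
  have hstep : ∀ k, 1 ≤ k → ∀ x, ∃ y, (u ^ (2^k)) x = x + (2^k) • y := by
    intro k
    induction k with
    | zero => omega
    | succ k ih =>
      intro _ x
      have hmul : ∀ z, (u ^ (2^(k+1))) z = (u ^ (2^k)) ((u ^ (2^k)) z) := by
        intro z
        have : u ^ (2^(k+1)) = (u ^ (2^k)) * (u ^ (2^k)) := by
          rw [← pow_add]
          ring_nf
        rw [this]
        rfl
      rcases Nat.eq_zero_or_pos k with hk | hk
      · subst hk
        obtain ⟨y, hy⟩ := base h u x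
        refine ⟨y, ?_⟩
        rw [hmul]
        simpa using hy
      · obtain ⟨y, hy⟩ := ih hk x
        obtain ⟨y', hy'⟩ := ih hk y
        refine ⟨y + 2^(k-1) • y', ?_⟩
        rw [hmul, hy, map_add, map_nsmul, hy']
        have hexp : (2:ℕ)^k * 2^k = 2^(k+1) * 2^(k-1) := by
          rw [← pow_add, ← pow_add]
          congr 1
          omega
        have hadd : (2:ℕ)^(k+1) = 2^k + 2^k := by ring
        rw [hy, smul_add, smul_smul]
        conv_rhs => rw [smul_add, smul_smul, ← hexp, hadd, add_nsmul]
        abel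
  have hkill : ∀ y : ZMod (2^n) × ZMod (2^m), (2^m : ℕ) • y = 0 := by
    intro y
    apply Prod.ext <;>
      simp only [Prod.smul_fst, Prod.smul_snd, Prod.fst_zero, Prod.snd_zero]
    · rw [nsmul_eq_mul, (ZMod.natCast_eq_zero_iff _ _).mpr (pow_dvd_pow 2 h.le), zero_mul]
    · rw [nsmul_eq_mul, ZMod.natCast_self, zero_mul]
  apply DFunLike.ext
  intro x
  obtain ⟨y, hy⟩ := hstep m (by omega) x
  rw [hy, hkill, add_zero]
  rfl

private lemma key (h : n < m) :
    ∃ k : ℕ,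
      Nat.card (MulAut (Multiplicative (ZMod (2 ^ n)) × Multiplicative (ZMod (2 ^ m)))) =
        2 ^ k := by
  haveI : Fact (Nat.Prime 2) := Fact.mk Nat.prime_two
  have hP : IsPGroup 2 (AddAut (ZMod (2^n) × ZMod (2^m))) :=
    fun u => ⟨m, pow_eq_one h u⟩
  have ψ : AddAut (ZMod (2^n) × ZMod (2^m)) ≃*
      MulAut (Multiplicative (ZMod (2^n) × ZMod (2^m))) :=
    { toFun := fun f => MulEquiv.toAdditive.symm f
      invFun := fun f => MulEquiv.toAdditive f
      left_inv := fun _ => rfl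
      right_inv := fun _ => rfl
      map_mul' := fun _ _ => rfl }
  have hP2 := (hP.of_equiv ψ).of_equiv
    (MulAut.congr (MulEquiv.prodMultiplicative
      (G := ZMod (2^n)) (H := ZMod (2^m))))
  exact IsPGroup.iff_card.mp hP2

end Main

/-- For `n ≠ m`, the automorphism group `Aut(C_{2^n} × C_{2^m})` is a
2-group: its order is a power of 2. -/
theorem stmt5 (n m : ℕ) (hnm : n ≠ m) :
    ∃ k : ℕ,
      Nat.card (MulAut (Multiplicative (ZMod (2 ^ n)) × Multiplicative (ZMod (2 ^ m)))) =
        2 ^ k := by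
  rcases hnm.lt_or_gt with h | h
  · exact key h
  · obtain ⟨k, hk⟩ := key h
    refine ⟨k, ?_⟩
    rw [← hk]
    exact Nat.card_congr (MulAut.congr (MulEquiv.prodComm
      (M := Multiplicative (ZMod (2^n))) (N := Multiplicative (ZMod (2^m))))).toEquiv
end

section
/- Let n ≥ 0. Then the automorphism group Aut(Q8 × C_{2^n}) is a {2,3}-group whose Sylow 3-subgroups have order 3; that is, there exists a natural number a with |Aut(Q8 × C_{2^n})| = 3 · 2^a. -/
open QuaternionGroup
namespace Stmt7

abbrev Q : Type := QuaternionGroup 2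

section Pow
variable {M : Type*} [Monoid M]

lemma pow_mod_four {x : M} (hx : x ^ 4 = 1) (k : ℕ) : x ^ k = x ^ (k % 4) := by
  conv_lhs => rw [← Nat.div_add_mod k 4]
  rw [pow_add, pow_mul, hx, one_pow, one_mul]

lemma pow_eq_mod_four {x : M} (hx : x ^ 4 = 1) {k l : ℕ} (h : k % 4 = l % 4) :
    x ^ k = x ^ l := by rw [pow_mod_four hx k, pow_mod_four hx l, h]

lemma pow_mod_two {x : M} (hx : x ^ 2 = 1) (k : ℕ) : x ^ k = x ^ (k % 2) := by
  conv_lhs => rw [← Nat.div_add_mod k 2]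
  rw [pow_add, pow_mul, hx, one_pow, one_mul]

lemma pow_eq_mod_two {x : M} (hx : x ^ 2 = 1) {k l : ℕ} (h : k % 2 = l % 2) :
    x ^ k = x ^ l := by rw [pow_mod_two hx k, pow_mod_two hx l, h]

end Pow

section QHom
variable {G : Type*} [Group G] {x y : G}

lemma y_pow (hyx : y * x = x ^ 3 * y) (k : ℕ) : y * x ^ k = x ^ (3 * k) * y := by
  induction k with
  | zero => simp
  | succ k ih =>
    rw [pow_succ, ← mul_assoc, ih, mul_assoc, hyx, ← mul_assoc, ← pow_add]
    ring_nf

/-- The hom `Q8 →* G` sending `a i ↦ x ^ i.val`, `xa i ↦ y * x ^ i.val`. -/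
def qHom (hx4 : x ^ 4 = 1) (hyx : y * x = x ^ 3 * y) (hy2 : y ^ 2 = x ^ 2) : Q →* G :=
  MonoidHom.mk' (fun g => match g with
    | .a i => x ^ i.val
    | .xa i => y * x ^ i.val) (by
      rintro (i | i) (j | j)
      · show x ^ (i + j).val = x ^ i.val * x ^ j.val
        rw [← pow_add]
        exact pow_eq_mod_four hx4 (by revert i j; decide)
      · show y * x ^ (j - i).val = x ^ i.val * (y * x ^ j.val)
        rw [y_pow hyx, y_pow hyx, ← mul_assoc, ← pow_add]
        congr 1
        exact pow_eq_mod_four hx4 (by revert i j; decide)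
      · show y * x ^ (i + j).val = y * x ^ i.val * x ^ j.val
        rw [mul_assoc, ← pow_add]
        congr 1
        exact pow_eq_mod_four hx4 (by revert i j; decide)
      · show x ^ (((2 : ℕ) : ZMod 4) + j - i).val = y * x ^ i.val * (y * x ^ j.val)
        have x_pow_y : ∀ k : ℕ, x ^ k * y = y * x ^ (3 * k) := by
          intro k
          rw [y_pow hyx (3 * k), show x ^ (3 * (3 * k)) = x ^ k from
            pow_eq_mod_four hx4 (by omega)]
        have h1 : y * x ^ i.val * (y * x ^ j.val)
            = y ^ 2 * (x ^ (3 * i.val) * x ^ j.val) := by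
          rw [← mul_assoc (y * x ^ i.val), mul_assoc y (x ^ i.val), x_pow_y,
            ← mul_assoc, ← mul_assoc, ← sq, mul_assoc]
        rw [h1, hy2, ← pow_add, ← pow_add]
        exact pow_eq_mod_four hx4 (by clear h1 x_pow_y; revert i j; decide))

@[simp] lemma qHom_a (hx4 : x ^ 4 = 1) (hyx : y * x = x ^ 3 * y) (hy2 : y ^ 2 = x ^ 2)
    (i : ZMod 4) : qHom hx4 hyx hy2 (.a i) = x ^ i.val := rfl

@[simp] lemma qHom_xa (hx4 : x ^ 4 = 1) (hyx : y * x = x ^ 3 * y) (hy2 : y ^ 2 = x ^ 2)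
    (i : ZMod 4) : qHom hx4 hyx hy2 (.xa i) = y * x ^ i.val := rfl

/-- homs out of Q8 are determined by images of `a 1` and `xa 0`. -/
lemma qhom_ext {M : Type*} [Monoid M] {f g : Q →* M}
    (h1 : f (.a 1) = g (.a 1)) (h0 : f (.xa 0) = g (.xa 0)) : f = g := by
  have ha : ∀ i : ZMod 4, f (.a i) = g (.a i) := by
    intro i
    have : (QuaternionGroup.a i : Q) = (.a 1 : Q) ^ i.val := by
      rw [a_one_pow]
      congr 1
      exact (ZMod.natCast_zmod_val i).symm
    rw [this, map_pow, map_pow, h1]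
  ext z
  rcases z with i | i
  · exact ha i
  · have : (QuaternionGroup.xa i : Q) = (.xa 0 : Q) * .a i := by
      rw [xa_mul_a, zero_add]
    rw [this, map_mul, map_mul, h0, ha i]

end QHom


section AutQ

/-- predicate characterising pairs `(θ (a 1), θ (xa 0))` for automorphisms of Q8. -/
def P (p : Q × Q) : Prop :=
  p.1 ^ 4 = 1 ∧ p.1 ^ 2 ≠ 1 ∧ p.2 * p.1 = p.1 ^ 3 * p.2 ∧ p.2 ^ 2 = p.1 ^ 2 ∧
    p.2 ≠ 1 ∧ p.2 ≠ p.1 ∧ p.2 ≠ p.1 ^ 2 ∧ p.2 ≠ p.1 ^ 3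

instance : DecidablePred P := fun p => by unfold P; infer_instance

variable {G : Type*} [Group G]

lemma pow_ne_one4 {x : G} (hx4 : x ^ 4 = 1) (hx2 : x ^ 2 ≠ 1) :
    ∀ d, 0 < d → d < 4 → x ^ d ≠ 1 := by
  intro d hd1 hd4 h
  have hx1 : x ≠ 1 := fun h1 => hx2 (by rw [h1, one_pow])
  interval_cases d
  · exact hx1 (by simpa using h)
  · exact hx2 h
  · have : x = 1 := by
      have h4 := hx4
      rw [show (4:ℕ) = 3 + 1 from rfl, pow_add, h, one_mul, pow_one] at h4
      exact h4
    exact hx1 this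

lemma pow_inj4 {x : G} (hx4 : x ^ 4 = 1) (hx2 : x ^ 2 ≠ 1) {k l : ℕ}
    (hk : k < 4) (hl : l < 4) (h : x ^ k = x ^ l) : k = l := by
  have key : ∀ {a b : ℕ}, a ≤ b → b < 4 → x ^ a = x ^ b → a = b := by
    intro a b hab hb4 hab2
    by_contra hne
    have hpos : 0 < b - a := by omega
    have h0 : x ^ (b - a) * x ^ a = 1 * x ^ a := by
      rw [← pow_add, one_mul, hab2]
      congr 1
      omega
    exact pow_ne_one4 hx4 hx2 (b - a) hpos (by omega) (mul_right_cancel h0)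
  rcases le_total k l with h' | h'
  · exact key h' hl h
  · exact (key h' hk h.symm).symm

lemma y_ne_pow {x y : G} (h5 : y ≠ 1) (h6 : y ≠ x) (h7 : y ≠ x ^ 2) (h8 : y ≠ x ^ 3) :
    ∀ m, m < 4 → y ≠ x ^ m := by
  intro m hm
  interval_cases m
  · simpa using h5
  · simpa using h6
  · exact h7
  · exact h8

/-- the automorphism of Q8 determined by a pair satisfying `P`. -/
noncomputable def mkAut (p : {p : Q × Q // P p}) : MulAut Q := by
  refine MulEquiv.ofBijective (qHom p.2.1 p.2.2.2.1 p.2.2.2.2.1)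
    (Finite.injective_iff_bijective.mp ?_)
  obtain ⟨⟨x, y⟩, hx4, hx2, hyx, hy2, h5, h6, h7, h8⟩ := p
  have hinvpow : ∀ k : ℕ, (x ^ k)⁻¹ = x ^ (3 * k) := by
    intro k
    refine inv_eq_of_mul_eq_one_right ?_
    rw [← pow_add]
    exact (pow_eq_mod_four hx4 (show (k + 3 * k) % 4 = 0 % 4 by omega)).trans (pow_zero x)
  have hy_eq : ∀ a b : ℕ, y * x ^ b = x ^ a → False := by
    intro a b hab
    have : y = x ^ a * (x ^ b)⁻¹ := (eq_mul_inv_iff_mul_eq).mpr hab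
    rw [hinvpow, ← pow_add] at this
    exact y_ne_pow h5 h6 h7 h8 ((a + 3 * b) % 4) (Nat.mod_lt _ (by norm_num))
      (this.trans (pow_mod_four hx4 _))
  have hvlt : ∀ i : ZMod (2 * 2), i.val < 4 := fun i => ZMod.val_lt i
  have hvinj : ∀ i j : ZMod (2 * 2), i.val = j.val → i = j := by
    intro i j hij
    rw [← ZMod.natCast_zmod_val i, ← ZMod.natCast_zmod_val j, hij]
  rintro (i | i) (j | j) h
  · simp only [qHom_a] at h
    exact congrArg _ (hvinj i j (pow_inj4 hx4 hx2 (hvlt i) (hvlt j) h))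
  · simp only [qHom_a, qHom_xa] at h
    exact absurd h.symm (fun hh => hy_eq i.val j.val hh)
  · simp only [qHom_a, qHom_xa] at h
    exact absurd h (fun hh => hy_eq j.val i.val hh)
  · simp only [qHom_xa] at h
    exact congrArg _ (hvinj i j (pow_inj4 hx4 hx2 (hvlt i) (hvlt j) (mul_left_cancel h)))

lemma mkAut_apply (p : {p : Q × Q // P p}) (g : Q) :
    mkAut p g = qHom p.2.1 p.2.2.2.1 p.2.2.2.2.1 g := rfl

lemma mkAut_a_one (p : {p : Q × Q // P p}) : mkAut p (.a 1) = p.1.1 := by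
  rw [mkAut_apply, qHom_a, show ((1 : ZMod (2 * 2))).val = 1 from rfl, pow_one]

lemma mkAut_xa_zero (p : {p : Q × Q // P p}) : mkAut p (.xa 0) = p.1.2 := by
  rw [mkAut_apply, qHom_xa, show ((0 : ZMod (2 * 2))).val = 0 from rfl, pow_zero, mul_one]

lemma mkAut_eq {p : {p : Q × Q // P p}} {θ : MulAut Q}
    (h1 : p.1.1 = θ (.a 1)) (h0 : p.1.2 = θ (.xa 0)) : mkAut p = θ := by
  have h := qhom_ext (M := Q) (f := (mkAut p).toMonoidHom) (g := θ.toMonoidHom)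
    (by show mkAut p (.a 1) = θ (.a 1); rw [mkAut_a_one, h1])
    (by show mkAut p (.xa 0) = θ (.xa 0); rw [mkAut_xa_zero, h0])
  exact MulEquiv.ext fun z => DFunLike.congr_fun h z

/-- automorphisms of Q8 correspond to pairs satisfying `P`. -/
noncomputable def autQEquiv : MulAut Q ≃ {p : Q × Q // P p} where
  toFun θ := ⟨(θ (.a 1), θ (.xa 0)), by
    have hinj := θ.injective
    refine ⟨?_, ?_, ?_, ?_, ?_, ?_, ?_, ?_⟩
    · rw [← map_pow, show ((.a 1 : Q)) ^ 4 = 1 by decide, map_one]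
    · intro h
      rw [← map_pow, ← map_one θ] at h
      exact (by decide : ((.a 1 : Q)) ^ 2 ≠ 1) (hinj h)
    · rw [← map_mul, ← map_pow, ← map_mul,
        show ((.xa 0 : Q) * .a 1) = (.a 1 : Q) ^ 3 * .xa 0 by decide]
    · rw [← map_pow, ← map_pow, show ((.xa 0 : Q)) ^ 2 = (.a 1 : Q) ^ 2 by decide]
    · exact fun h => (by decide : (.xa 0 : Q) ≠ 1) (hinj (h.trans (map_one θ).symm))
    · exact fun h => (by decide : (.xa 0 : Q) ≠ .a 1) (hinj h)
    · exact fun h => (by decide : (.xa 0 : Q) ≠ (.a 1 : Q) ^ 2)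
        (hinj (h.trans (map_pow θ _ 2).symm))
    · exact fun h => (by decide : (.xa 0 : Q) ≠ (.a 1 : Q) ^ 3)
        (hinj (h.trans (map_pow θ _ 3).symm))⟩
  invFun := mkAut
  left_inv θ := mkAut_eq rfl rfl
  right_inv p := Subtype.ext (Prod.ext (mkAut_a_one p) (mkAut_xa_zero p))

lemma card_autQ : Nat.card (MulAut Q) = 24 := by
  rw [Nat.card_congr autQEquiv, Nat.card_eq_fintype_card]
  decide

end AutQ

section Q8Facts

lemma center_Q : ∀ g : Q, (∀ y, g * y = y * g) → g = 1 ∨ g = .a 2 := by decide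

lemma a2_mul_a2 : (.a 2 : Q) * .a 2 = 1 := by decide

lemma a2_ne_one : (.a 2 : Q) ≠ 1 := by decide

lemma sq_eq_a2 : ∀ g : Q, g ^ 2 = 1 → g ≠ 1 → g = .a 2 := by decide

lemma aut_fixes_a2 (θ : MulAut Q) : θ (.a 2) = .a 2 := by
  refine sq_eq_a2 _ ?_ ?_
  · rw [← map_pow, show ((.a 2 : Q)) ^ 2 = 1 by decide, map_one]
  · exact fun h => a2_ne_one (θ.injective (h.trans (map_one θ).symm))

lemma eq_a2_of_mul_a2 {g : Q} (h : g * .a 2 = 1) : g = .a 2 :=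
  calc g = g * ((.a 2 : Q) * .a 2) := by rw [a2_mul_a2, mul_one]
  _ = (g * .a 2) * .a 2 := by rw [mul_assoc]
  _ = 1 * .a 2 := by rw [h]
  _ = .a 2 := one_mul _

lemma hom_a2_eq_one {C : Type*} [CommGroup C] (γ : Q →* C) : γ (.a 2) = 1 := by
  have hrel := congrArg γ (show ((.xa 0 : Q) * .a 1) = (.a 1 : Q) ^ 3 * .xa 0 from by decide)
  rw [map_mul, map_mul, map_pow, mul_comm] at hrel
  have h1 : γ (.a 1) = γ (.a 1) ^ 3 := mul_right_cancel hrel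
  have h3 : γ (.a 1) ^ 2 * γ (.a 1) = 1 * γ (.a 1) := by
    rw [one_mul, ← pow_succ, ← h1]
  have h2 : γ (.a 1) ^ 2 = 1 := mul_right_cancel h3
  rw [show (.a 2 : Q) = (.a 1 : Q) ^ 2 from by decide, map_pow, h2]

end Q8Facts

section Decomp

variable (C : Type*) [CommGroup C] [Finite C]

/-- parameter space for automorphisms of `Q8 × C`. -/
abbrev TT := MulAut Q × {f : C →* Q // ∀ c y, f c * y = y * f c} × (Q →* C) × MulAut C

variable {C}

/-- the endomorphism of `Q8 × C` from a parameter quadruple. -/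
def bHom (α : MulAut Q) (β : {f : C →* Q // ∀ c y, f c * y = y * f c})
    (γ : Q →* C) (δ : MulAut C) : Q × C →* Q × C :=
  MonoidHom.mk' (fun g => (α g.1 * β.1 g.2, γ g.1 * δ g.2)) (by
    rintro ⟨q, c⟩ ⟨q', c'⟩
    refine Prod.ext ?_ ?_
    · show α (q * q') * β.1 (c * c') = (α q * β.1 c) * (α q' * β.1 c')
      rw [map_mul, map_mul]
      symm
      rw [← mul_assoc, mul_assoc (α q), β.2 c (α q'), ← mul_assoc, mul_assoc]
    · show γ (q * q') * δ (c * c') = (γ q * δ c) * (γ q' * δ c')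
      rw [map_mul, map_mul, mul_mul_mul_comm])

lemma bHom_inj (α : MulAut Q) (β : {f : C →* Q // ∀ c y, f c * y = y * f c})
    (γ : Q →* C) (δ : MulAut C) : Function.Injective (bHom α β γ δ) := by
  rw [injective_iff_map_eq_one]
  rintro ⟨q, c⟩ h
  rw [Prod.ext_iff] at h
  obtain ⟨h1, h2⟩ := h
  replace h1 : α q * β.1 c = 1 := h1
  replace h2 : γ q * δ c = 1 := h2
  have hbc := center_Q (β.1 c) (β.2 c)
  rcases hbc with hb | hb
  · have hq : q = 1 := by
      apply α.injective
      rw [map_one]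
      rw [hb, mul_one] at h1
      exact h1
    subst hq
    have hc : c = 1 := by
      apply δ.injective
      rw [map_one]
      rw [map_one, one_mul] at h2
      exact h2
    subst hc
    rfl
  · exfalso
    have hq : q = .a 2 := by
      apply α.injective
      rw [aut_fixes_a2]
      rw [hb] at h1
      exact eq_a2_of_mul_a2 h1
    subst hq
    have hc : c = 1 := by
      apply δ.injective
      rw [map_one]
      rw [hom_a2_eq_one γ, one_mul] at h2
      exact h2
    subst hc
    rw [map_one β.1] at hb
    exact a2_ne_one hb.symm

/-- the automorphism of `Q8 × C` from a parameter quadruple. -/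
noncomputable def bAut (α : MulAut Q) (β : {f : C →* Q // ∀ c y, f c * y = y * f c})
    (γ : Q →* C) (δ : MulAut C) : MulAut (Q × C) :=
  MulEquiv.ofBijective (bHom α β γ δ)
    (Finite.injective_iff_bijective.mp (bHom_inj α β γ δ))

/-- first component hom. -/
def Ahom (θ : MulAut (Q × C)) : Q →* Q :=
  (MonoidHom.fst Q C).comp (θ.toMonoidHom.comp (MonoidHom.inl Q C))

def Bhom (θ : MulAut (Q × C)) : C →* Q :=
  (MonoidHom.fst Q C).comp (θ.toMonoidHom.comp (MonoidHom.inr Q C))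

def Ghom (θ : MulAut (Q × C)) : Q →* C :=
  (MonoidHom.snd Q C).comp (θ.toMonoidHom.comp (MonoidHom.inl Q C))

def Dhom (θ : MulAut (Q × C)) : C →* C :=
  (MonoidHom.snd Q C).comp (θ.toMonoidHom.comp (MonoidHom.inr Q C))

lemma decomp (θ : MulAut (Q × C)) (q : Q) (c : C) :
    θ (q, c) = (Ahom θ q * Bhom θ c, Ghom θ q * Dhom θ c) := by
  have h : (q, c) = ((q, 1) : Q × C) * (1, c) := by
    rw [Prod.mk_mul_mk, mul_one, one_mul]
  rw [h, map_mul]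
  rfl

lemma Bcentral (θ : MulAut (Q × C)) : ∀ c y, Bhom θ c * y = y * Bhom θ c := by
  intro c y
  obtain ⟨w, hw⟩ := θ.surjective ((y, 1) : Q × C)
  have hcomm : θ ((1 : Q), c) * (y, 1) = ((y, 1) : Q × C) * θ (1, c) := by
    rw [← hw, ← map_mul, ← map_mul]
    congr 1
    obtain ⟨w1, w2⟩ := w
    rw [Prod.mk_mul_mk, Prod.mk_mul_mk, one_mul, mul_one, mul_comm]
  exact congrArg Prod.fst hcomm

lemma Bvals (θ : MulAut (Q × C)) (c : C) : Bhom θ c = 1 ∨ Bhom θ c = .a 2 :=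
  center_Q _ (Bcentral θ c)

lemma Asurj (θ : MulAut (Q × C)) : Function.Surjective (Ahom θ) := by
  have step1 : ∀ x : Q, ∃ q, Ahom θ q = x ∨ Ahom θ q = x * .a 2 := by
    intro x
    obtain ⟨⟨q, c⟩, hw⟩ := θ.surjective ((x, 1) : Q × C)
    rw [decomp] at hw
    have h1 : Ahom θ q * Bhom θ c = x := congrArg Prod.fst hw
    rcases Bvals θ c with hb | hb
    · exact ⟨q, Or.inl (by rw [hb, mul_one] at h1; exact h1)⟩
    · refine ⟨q, Or.inr ?_⟩
      rw [hb] at h1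
      rw [← h1, mul_assoc, a2_mul_a2, mul_one]
  obtain ⟨q0, hq0⟩ := step1 (.a 1)
  have hq2 : Ahom θ (q0 * q0) = .a 2 := by
    rw [map_mul]
    rcases hq0 with h | h <;> rw [h] <;> decide
  intro x
  obtain ⟨q, hq⟩ := step1 x
  rcases hq with h | h
  · exact ⟨q, h⟩
  · exact ⟨q * (q0 * q0), by rw [map_mul, h, hq2, mul_assoc, a2_mul_a2, mul_one]⟩

lemma Ainj (θ : MulAut (Q × C)) : Function.Injective (Ahom θ) :=
  Finite.injective_iff_surjective.mpr (Asurj θ)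

/-- first component automorphism. -/
noncomputable def Amut (θ : MulAut (Q × C)) : MulAut Q :=
  MulEquiv.ofBijective (Ahom θ) ⟨Ainj θ, Asurj θ⟩

lemma Dsurj (θ : MulAut (Q × C)) : Function.Surjective (Dhom θ) := by
  intro c
  obtain ⟨⟨q, c'⟩, hw⟩ := θ.surjective ((1, c) : Q × C)
  rw [decomp] at hw
  have h1 : Ahom θ q * Bhom θ c' = 1 := congrArg Prod.fst hw
  have h2 : Ghom θ q * Dhom θ c' = c := congrArg Prod.snd hw
  have hq : q = 1 ∨ q = .a 2 := by
    rcases Bvals θ c' with hb | hb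
    · left
      apply Ainj θ
      rw [map_one]
      rw [hb, mul_one] at h1
      exact h1
    · right
      apply Ainj θ
      have ha : Ahom θ (.a 2) = .a 2 := aut_fixes_a2 (Amut θ)
      rw [ha]
      rw [hb] at h1
      exact eq_a2_of_mul_a2 h1
  have hγ : Ghom θ q = 1 := by
    rcases hq with h | h <;> subst h
    · exact map_one _
    · exact hom_a2_eq_one (Ghom θ)
  rw [hγ, one_mul] at h2
  exact ⟨c', h2⟩

lemma Dinj (θ : MulAut (Q × C)) : Function.Injective (Dhom θ) :=
  Finite.injective_iff_surjective.mpr (Dsurj θ)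

/-- second component automorphism. -/
noncomputable def Dmut (θ : MulAut (Q × C)) : MulAut C :=
  MulEquiv.ofBijective (Dhom θ) ⟨Dinj θ, Dsurj θ⟩

variable (C)

/-- automorphisms of `Q8 × C` decompose as quadruples. -/
noncomputable def decompEquiv : MulAut (Q × C) ≃ TT C where
  toFun θ := (Amut θ, ⟨Bhom θ, Bcentral θ⟩, Ghom θ, Dmut θ)
  invFun t := bAut t.1 t.2.1 t.2.2.1 t.2.2.2
  left_inv θ := by
    apply MulEquiv.ext
    rintro ⟨q, c⟩
    rw [show (bAut (Amut θ) ⟨Bhom θ, Bcentral θ⟩ (Ghom θ) (Dmut θ)) (q, c)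
      = (Ahom θ q * Bhom θ c, Ghom θ q * Dhom θ c) from rfl, ← decomp]
  right_inv t := by
    obtain ⟨α, β, γ, δ⟩ := t
    refine Prod.ext ?_ (Prod.ext ?_ (Prod.ext ?_ ?_))
    · apply MulEquiv.ext
      intro q
      show α q * β.1 1 = α q
      rw [map_one, mul_one]
    · apply Subtype.ext
      apply MonoidHom.ext
      intro c
      show α 1 * β.1 c = β.1 c
      rw [map_one, one_mul]
    · apply MonoidHom.ext
      intro q
      show γ q * δ 1 = γ q
      rw [map_one, mul_one]
    · apply MulEquiv.ext
      intro c
      show γ 1 * δ c = δ c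
      rw [map_one, one_mul]

lemma card_decomp :
    Nat.card (MulAut (Q × C)) =
      24 * (Nat.card {f : C →* Q // ∀ c y, f c * y = y * f c} *
        (Nat.card (Q →* C) * Nat.card (MulAut C))) := by
  rw [Nat.card_congr (decompEquiv C), Nat.card_prod, Nat.card_prod, Nat.card_prod, card_autQ]

end Decomp

section PairCard

/-- a two-element subtype has cardinality 2. -/
lemma card_pair_subtype {α : Type*} [DecidableEq α] {A B : α} (h : A ≠ B) :
    Nat.card {x : α // x = A ∨ x = B} = 2 := by
  have e : {x : α // x = A ∨ x = B} ≃ Bool := {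
    toFun := fun s => if s.1 = B then true else false
    invFun := fun b => if b then ⟨B, Or.inr rfl⟩ else ⟨A, Or.inl rfl⟩
    left_inv := by
      rintro ⟨x, rfl | rfl⟩
      · simp [h]
      · simp
    right_inv := by
      rintro (_ | _)
      · simp [h]
      · simp }
  rw [Nat.card_congr e, Nat.card_eq_fintype_card, Fintype.card_bool]

end PairCard

section Counts

variable (n : ℕ)

lemma hom_a1_sq {C : Type*} [CommGroup C] (γ : Q →* C) : γ (.a 1) ^ 2 = 1 := by
  have hrel := congrArg γ (show ((.xa 0 : Q) * .a 1) = (.a 1 : Q) ^ 3 * .xa 0 from by decide)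
  rw [map_mul, map_mul, map_pow, mul_comm] at hrel
  have h1 : γ (.a 1) = γ (.a 1) ^ 3 := mul_right_cancel hrel
  have h3 : γ (.a 1) ^ 2 * γ (.a 1) = 1 * γ (.a 1) := by
    rw [one_mul, ← pow_succ, ← h1]
  exact mul_right_cancel h3

/-- counting `β`-parameters: homs `C_{2^n} →* Q8` with central image, for `n ≥ 1`. -/
lemma count_beta (hn : 0 < n) [NeZero (2 ^ n)] :
    Nat.card {f : Multiplicative (ZMod (2 ^ n)) →* Q // ∀ c y, f c * y = y * f c} = 2 := by
  haveI : Fact (1 < 2 ^ n) := ⟨by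
    have := Nat.one_lt_two_pow_iff.mpr hn.ne'
    exact this⟩
  set m := 2 ^ n with hm
  have hdvd : 2 ∣ m := dvd_pow_self 2 hn.ne'
  set g0 : Multiplicative (ZMod m) := Multiplicative.ofAdd 1 with hg0
  have gen_pow : ∀ c : Multiplicative (ZMod m), c = g0 ^ (Multiplicative.toAdd c).val := by
    intro c
    apply Multiplicative.toAdd.injective
    rw [toAdd_pow, hg0, toAdd_ofAdd, nsmul_eq_mul, mul_one, ZMod.natCast_zmod_val]
  have e : {f : Multiplicative (ZMod m) →* Q // ∀ c y, f c * y = y * f c}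
      ≃ {w : Q // w = 1 ∨ w = .a 2} := {
    toFun := fun f => ⟨f.1 g0, center_Q _ (f.2 g0)⟩
    invFun := fun w => by
      have hw2 : w.1 ^ 2 = 1 := by
        rcases w.2 with h | h <;> rw [h] <;> decide
      have hwc : ∀ y : Q, w.1 * y = y * w.1 := by
        rcases w.2 with h | h <;> rw [h] <;> intro y
        · rw [one_mul, mul_one]
        · revert y; decide
      refine ⟨MonoidHom.mk' (fun c => w.1 ^ (Multiplicative.toAdd c).val) ?_, ?_⟩
      · intro c c'
        rw [← pow_add]
        apply pow_eq_mod_two hw2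
        rw [toAdd_mul, ZMod.val_add, Nat.mod_mod_of_dvd _ hdvd]
      · intro c y
        exact ((show Commute w.1 y from hwc y).pow_left _)
    left_inv := by
      intro f
      apply Subtype.ext
      apply MonoidHom.ext
      intro c
      show f.1 g0 ^ (Multiplicative.toAdd c).val = f.1 c
      conv_rhs => rw [gen_pow c]
      rw [map_pow]
    right_inv := by
      intro w
      apply Subtype.ext
      show w.1 ^ (Multiplicative.toAdd g0).val = w.1
      rw [hg0, toAdd_ofAdd, ZMod.val_one, pow_one] }
  rw [Nat.card_congr e]
  exact card_pair_subtype (by decide)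

/-- the 2-torsion of `C_{2^n}` has 2 elements for `n ≥ 1`. -/
lemma count_tor (hn : 0 < n) [NeZero (2 ^ n)] :
    Nat.card {c : Multiplicative (ZMod (2 ^ n)) // c ^ 2 = 1} = 2 := by
  set B : Multiplicative (ZMod (2 ^ n)) := Multiplicative.ofAdd ((2 ^ (n - 1) : ℕ) : ZMod (2 ^ n))
    with hB
  have hpow : (2 : ℕ) ^ n = 2 * 2 ^ (n - 1) := by
    rw [← pow_succ']
    congr 1
    omega
  have hchar : ∀ c : Multiplicative (ZMod (2 ^ n)), c ^ 2 = 1 ↔ (c = 1 ∨ c = B) := by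
    intro c
    rw [sq]
    constructor
    · intro hc
      have hadd : Multiplicative.toAdd c + Multiplicative.toAdd c = 0 :=
        congrArg Multiplicative.toAdd hc
      set x := Multiplicative.toAdd c with hx
      have hv : (2 ^ n : ℕ) ∣ x.val + x.val := by
        rw [← ZMod.natCast_eq_zero_iff]
        push_cast [ZMod.natCast_zmod_val]
        exact hadd
      have hlt := ZMod.val_lt x
      obtain ⟨k, hk⟩ := hv
      rcases k with _ | _ | k
      · left
        have h0 : x.val = 0 := by omega
        have hx0 : x = 0 := (ZMod.val_eq_zero x).mp h0
        apply Multiplicative.toAdd.injective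
        exact hx0.trans toAdd_one.symm
      · right
        have hxv : x.val = 2 ^ (n - 1) := by
          rw [Nat.mul_one] at hk
          omega
        apply Multiplicative.toAdd.injective
        show x = Multiplicative.toAdd B
        rw [hB, toAdd_ofAdd, ← hxv, ZMod.natCast_zmod_val]
      · exfalso
        have hcontra : x.val + x.val < 2 ^ n * (k + 1 + 1) :=
          calc x.val + x.val < 2 ^ n * 2 := by omega
          _ ≤ 2 ^ n * (k + 1 + 1) := Nat.mul_le_mul_left _ (by omega)
        exact absurd hk (Nat.ne_of_lt hcontra)
    · rintro (rfl | rfl)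
      · rw [one_mul]
      · show B * B = 1
        apply Multiplicative.toAdd.injective
        rw [toAdd_mul, hB, toAdd_ofAdd, toAdd_one, ← Nat.cast_add,
          show (2 : ℕ) ^ (n - 1) + 2 ^ (n - 1) = 2 ^ n from by rw [hpow, two_mul]]
        exact ZMod.natCast_self _
  have hne : (1 : Multiplicative (ZMod (2 ^ n))) ≠ B := by
    intro h
    have h0 : ((2 ^ (n - 1) : ℕ) : ZMod (2 ^ n)) = 0 := by
      have h1 := congrArg Multiplicative.toAdd h
      rw [toAdd_one, hB, toAdd_ofAdd] at h1
      exact h1.symm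
    rw [ZMod.natCast_eq_zero_iff] at h0
    have hle := Nat.le_of_dvd (by positivity) h0
    have hlt2 : (2 : ℕ) ^ (n - 1) < 2 ^ n := Nat.pow_lt_pow_right (by norm_num) (by omega)
    omega
  rw [Nat.card_congr (Equiv.subtypeEquivRight hchar)]
  exact card_pair_subtype hne

/-- counting `γ`-parameters: homs `Q8 →* C_{2^n}`, for `n ≥ 1`. -/
lemma count_gamma (hn : 0 < n) [NeZero (2 ^ n)] :
    Nat.card (Q →* Multiplicative (ZMod (2 ^ n))) = 4 := by
  have e : (Q →* Multiplicative (ZMod (2 ^ n))) ≃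
      {p : Multiplicative (ZMod (2 ^ n)) × Multiplicative (ZMod (2 ^ n)) //
        p.1 ^ 2 = 1 ∧ p.2 ^ 2 = 1} := {
    toFun := fun γ => ⟨(γ (.a 1), γ (.xa 0)), hom_a1_sq γ, by
      rw [← map_pow, show ((.xa 0 : Q)) ^ 2 = .a 2 from by decide, hom_a2_eq_one]⟩
    invFun := fun p =>
      qHom (x := p.1.1) (y := p.1.2)
        (by rw [show (4 : ℕ) = 2 * 2 from rfl, pow_mul, p.2.1, one_pow])
        (by rw [show (3 : ℕ) = 2 + 1 from rfl, pow_add, p.2.1, one_mul, pow_one, mul_comm])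
        (by rw [p.2.1, p.2.2])
    left_inv := by
      intro γ
      apply qhom_ext
      · rw [qHom_a, show ((1 : ZMod (2 * 2))).val = 1 from rfl, pow_one]
      · rw [qHom_xa, show ((0 : ZMod (2 * 2))).val = 0 from rfl, pow_zero, mul_one]
    right_inv := by
      intro p
      apply Subtype.ext
      apply Prod.ext
      · show _ ^ ((1 : ZMod (2 * 2))).val = p.1.1
        rw [show ((1 : ZMod (2 * 2))).val = 1 from rfl, pow_one]
      · show _ * _ ^ ((0 : ZMod (2 * 2))).val = p.1.2
        rw [show ((0 : ZMod (2 * 2))).val = 0 from rfl, pow_zero, mul_one] }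
  rw [Nat.card_congr (e.trans (Equiv.subtypeProdEquivProd (p := fun a => a ^ 2 = 1) (q := fun b => b ^ 2 = 1))), Nat.card_prod,
    count_tor n hn]

/-- counting `δ`-parameters: automorphisms of `C_{2^n}`, for `n ≥ 1`. -/
lemma count_delta (hn : 0 < n) [NeZero (2 ^ n)] :
    Nat.card (MulAut (Multiplicative (ZMod (2 ^ n)))) = 2 ^ (n - 1) := by
  have e1 : (ZMod (2 ^ n) ≃+ ZMod (2 ^ n)) ≃
      MulAut (Multiplicative (ZMod (2 ^ n))) := AddEquiv.toMultiplicative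
  rw [← Nat.card_congr e1, Nat.card_congr (ZMod.AddAutEquivUnits (2 ^ n)).toEquiv,
    Nat.card_congr Additive.toMul, Nat.card_eq_fintype_card, ZMod.card_units_eq_totient,
    Nat.totient_prime_pow Nat.prime_two hn]
  simp

lemma count_beta0 : Nat.card {f : Multiplicative (ZMod (2 ^ 0)) →* Q //
    ∀ c y, f c * y = y * f c} = 1 := by
  haveI : Subsingleton (ZMod (2 ^ 0)) := show Subsingleton (ZMod 1) by infer_instance
  haveI : Subsingleton (Multiplicative (ZMod (2 ^ 0))) :=
    Equiv.subsingleton (Multiplicative.toAdd)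
  rw [Nat.card_eq_one_iff_unique]
  refine ⟨⟨?_⟩, ⟨⟨1, fun c y => by simp⟩⟩⟩
  rintro ⟨f, hf⟩ ⟨g, hg⟩
  apply Subtype.ext
  apply MonoidHom.ext
  intro c
  rw [Subsingleton.elim c 1, map_one, map_one]

lemma count_gamma0 : Nat.card (Q →* Multiplicative (ZMod (2 ^ 0))) = 1 := by
  haveI : Subsingleton (ZMod (2 ^ 0)) := show Subsingleton (ZMod 1) by infer_instance
  haveI : Subsingleton (Multiplicative (ZMod (2 ^ 0))) :=
    Equiv.subsingleton (Multiplicative.toAdd)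
  rw [Nat.card_eq_one_iff_unique]
  exact ⟨⟨fun f g => MonoidHom.ext fun q => Subsingleton.elim _ _⟩, ⟨1⟩⟩

lemma count_delta0 : Nat.card (MulAut (Multiplicative (ZMod (2 ^ 0)))) = 1 := by
  haveI : Subsingleton (ZMod (2 ^ 0)) := show Subsingleton (ZMod 1) by infer_instance
  haveI : Subsingleton (Multiplicative (ZMod (2 ^ 0))) :=
    Equiv.subsingleton (Multiplicative.toAdd)
  rw [Nat.card_eq_one_iff_unique]
  exact ⟨⟨fun f g => MulEquiv.ext fun q => Subsingleton.elim _ _⟩, ⟨MulEquiv.refl _⟩⟩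

end Counts

end Stmt7

/-- For any `n ≥ 0`, the automorphism group `Aut(Q8 × C_{2^n})` is a
`{2,3}`-group whose Sylow 3-subgroups have order 3: its order is `3 * 2 ^ a` for some
natural number `a`. -/
theorem stmt7 (n : ℕ) :
    ∃ a : ℕ,
      Nat.card (MulAut (QuaternionGroup 2 × Multiplicative (ZMod (2 ^ n)))) = 3 * 2 ^ a := by
  haveI : NeZero (2 ^ n) := ⟨pow_ne_zero n two_ne_zero⟩
  rcases Nat.eq_zero_or_pos n with rfl | hn
  · refine ⟨3, ?_⟩
    rw [Stmt7.card_decomp, Stmt7.count_beta0, Stmt7.count_gamma0, Stmt7.count_delta0]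
    norm_num
  · refine ⟨n + 5, ?_⟩
    rw [Stmt7.card_decomp, Stmt7.count_beta n hn, Stmt7.count_gamma n hn,
      Stmt7.count_delta n hn, show n + 5 = 6 + (n - 1) from by omega, pow_add]
    ring
end

section
/- Let n ≥ 2. Then the automorphism group Aut(C4 ⋊ C_{2^n}) is a 2-group, i.e., its order is a power of 2. -/
namespace Stmt9

open SemidirectProduct Multiplicative

variable {n : ℕ}

instance : NeZero (2 ^ n) := ⟨pow_ne_zero n two_ne_zero⟩

lemma cast_val {m : ℕ} [NeZero m] (y : ZMod m) : ((y.val : ℕ) : ZMod m) = y := by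
  rw [ZMod.natCast_val, ZMod.cast_id]

lemma two_dvd_pow (hn : 2 ≤ n) : (2:ℕ) ∣ 2 ^ n := dvd_pow_self 2 (by omega)

lemma val_mul_parity (hn : 2 ≤ n) (k : ℕ) (s : ZMod (2 ^ n)) :
    ((k : ZMod (2 ^ n)) * s).val % 2 = (k * s.val) % 2 := by
  rw [ZMod.val_mul, Nat.mod_mod_of_dvd _ (two_dvd_pow hn), ZMod.val_natCast,
    Nat.mul_mod, Nat.mod_mod_of_dvd _ (two_dvd_pow hn), ← Nat.mul_mod]

lemma val_add_parity (hn : 2 ≤ n) (x y : ZMod (2 ^ n)) :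
    (x + y).val % 2 = (x.val + y.val) % 2 := by
  rw [ZMod.val_add, Nat.mod_mod_of_dvd _ (two_dvd_pow hn)]

lemma nat_mul_even {k : ℕ} (hk : k % 2 = 0) {q : ZMod (2 ^ n)} (h2 : q + q = 0) :
    (k : ZMod (2 ^ n)) * q = 0 := by
  have h2' : (2 : ZMod (2 ^ n)) * q = 0 := by rw [two_mul, h2]
  conv_lhs => rw [← Nat.div_add_mod k 2, hk]
  push_cast
  linear_combination ((k / 2 : ℕ) : ZMod (2 ^ n)) * h2'

lemma nat_mul_odd {k : ℕ} (hk : k % 2 = 1) {q : ZMod (2 ^ n)} (h2 : q + q = 0) :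
    (k : ZMod (2 ^ n)) * q = q := by
  have h2' : (2 : ZMod (2 ^ n)) * q = 0 := by rw [two_mul, h2]
  conv_lhs => rw [← Nat.div_add_mod k 2, hk]
  push_cast
  linear_combination ((k / 2 : ℕ) : ZMod (2 ^ n)) * h2'

lemma even_of_self_add (hn : 2 ≤ n) {q : ZMod (2 ^ n)} (h2 : q + q = 0) : q.val % 2 = 0 := by
  have h0 : (q + q).val = 0 := by rw [h2, ZMod.val_zero]
  rw [ZMod.val_add] at h0
  have hdvd : 2 ^ n ∣ q.val + q.val := Nat.dvd_of_mod_eq_zero h0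
  have h2n : (2:ℕ) * 2 ^ (n - 1) = 2 ^ n := by
    rw [← pow_succ']; congr 1; omega
  have hdvd' : 2 * 2 ^ (n-1) ∣ 2 * q.val := by rw [h2n, two_mul]; exact hdvd
  have hd : 2 ^ (n-1) ∣ q.val := (mul_dvd_mul_iff_left (two_ne_zero (α := ℕ))).mp hdvd'
  have h21 : (2:ℕ) ∣ 2 ^ (n - 1) := dvd_pow_self 2 (by omega)
  obtain ⟨t, ht⟩ := h21.trans hd
  omega

lemma pow_card_units (hn : 2 ≤ n) {w : ZMod (2 ^ n)} (hw : w.val % 2 = 1) :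
    w ^ 2 ^ (n - 1) = 1 := by
  have hodd : ¬ (2:ℕ) ∣ w.val := by omega
  have hco : Nat.Coprime w.val (2 ^ n) :=
    Nat.Coprime.pow_right _ (Nat.coprime_comm.mp ((Nat.Prime.coprime_iff_not_dvd Nat.prime_two).mpr hodd))
  set ω := ZMod.unitOfCoprime w.val hco with hω
  have h1 : ω ^ Nat.totient (2 ^ n) = 1 := ZMod.pow_totient ω
  have h2 : Nat.totient (2 ^ n) = 2 ^ (n - 1) := by
    rw [Nat.totient_prime_pow Nat.prime_two (by omega : 0 < n)]
    omega
  rw [h2] at h1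
  calc w ^ 2 ^ (n - 1) = ((ω : ZMod (2 ^ n))) ^ 2 ^ (n - 1) := by
        rw [hω, ZMod.coe_unitOfCoprime, cast_val]
    _ = ((ω ^ 2 ^ (n - 1) : (ZMod (2 ^ n))ˣ) : ZMod (2 ^ n)) := by push_cast; ring
    _ = 1 := by rw [h1, Units.val_one]


section Phi

variable (φ : Multiplicative (ZMod (2 ^ n)) →* MulAut (Multiplicative (ZMod 4)))

lemma inv_sq : (MulEquiv.inv (Multiplicative (ZMod 4))) ^ 2 = 1 := by
  ext x
  rw [pow_two, MulAut.mul_apply, MulEquiv.inv_apply, MulEquiv.inv_apply, inv_inv,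
    MulAut.one_apply]

variable (hφ : φ (Multiplicative.ofAdd (1 : ZMod (2 ^ n))) = MulEquiv.inv (Multiplicative (ZMod 4)))
include hφ

lemma phi_eq (y : ZMod (2 ^ n)) :
    φ (ofAdd y) = (MulEquiv.inv (Multiplicative (ZMod 4))) ^ y.val := by
  have h : ofAdd y = (ofAdd (1 : ZMod (2 ^ n))) ^ y.val := by
    rw [← ofAdd_nsmul, nsmul_eq_mul, mul_one, cast_val]
  rw [h, map_pow, hφ]

lemma phi_even {y : ZMod (2 ^ n)} (hy : y.val % 2 = 0) : φ (ofAdd y) = 1 := by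
  rw [phi_eq φ hφ]
  conv_lhs => rw [← Nat.div_add_mod y.val 2, hy, Nat.add_zero, pow_mul, inv_sq, one_pow]

lemma phi_odd {y : ZMod (2 ^ n)} (hy : y.val % 2 = 1) :
    φ (ofAdd y) = MulEquiv.inv (Multiplicative (ZMod 4)) := by
  rw [phi_eq φ hφ]
  conv_lhs => rw [← Nat.div_add_mod y.val 2, hy, pow_add, pow_mul, inv_sq, one_pow, pow_one,
    one_mul]

lemma phi_apply_even {y : ZMod (2 ^ n)} (hy : y.val % 2 = 0) (x : Multiplicative (ZMod 4)) :
    φ (ofAdd y) x = x := by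
  rw [phi_even φ hφ hy, MulAut.one_apply]

lemma phi_apply_odd {y : ZMod (2 ^ n)} (hy : y.val % 2 = 1) (x : Multiplicative (ZMod 4)) :
    φ (ofAdd y) x = x⁻¹ := by
  rw [phi_odd φ hφ hy, MulEquiv.inv_apply]

end Phi

section Gens

variable (φ : Multiplicative (ZMod (2 ^ n)) →* MulAut (Multiplicative (ZMod 4)))

/-- generator of the `C4` factor -/
def aa : Multiplicative (ZMod 4) ⋊[φ] Multiplicative (ZMod (2 ^ n)) := inl (ofAdd 1)

/-- generator of the `C_{2^n}` factor -/
def bb : Multiplicative (ZMod 4) ⋊[φ] Multiplicative (ZMod (2 ^ n)) := inr (ofAdd 1)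

lemma aa_pow (k : ℕ) : (aa φ) ^ k = inl (ofAdd ((k : ZMod 4))) := by
  rw [aa, ← map_pow, ← ofAdd_nsmul, nsmul_eq_mul, mul_one]

lemma bb_pow (k : ℕ) : (bb φ) ^ k = inr (ofAdd ((k : ZMod (2 ^ n)))) := by
  rw [bb, ← map_pow, ← ofAdd_nsmul, nsmul_eq_mul, mul_one]

lemma mk_decomp (x : ZMod 4) (y : ZMod (2 ^ n)) :
    (⟨ofAdd x, ofAdd y⟩ : Multiplicative (ZMod 4) ⋊[φ] Multiplicative (ZMod (2 ^ n)))
      = (aa φ) ^ x.val * (bb φ) ^ y.val := by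
  rw [aa_pow, bb_pow, cast_val, cast_val, mk_eq_inl_mul_inr]

lemma apply_mk (σ : MulAut (Multiplicative (ZMod 4) ⋊[φ] Multiplicative (ZMod (2 ^ n))))
    (x : ZMod 4) (y : ZMod (2 ^ n)) :
    σ (⟨ofAdd x, ofAdd y⟩ : Multiplicative (ZMod 4) ⋊[φ] Multiplicative (ZMod (2 ^ n)))
      = (σ (aa φ)) ^ x.val * (σ (bb φ)) ^ y.val := by
  rw [mk_decomp, map_mul, map_pow, map_pow]

lemma autext {σ τ : MulAut (Multiplicative (ZMod 4) ⋊[φ] Multiplicative (ZMod (2 ^ n)))}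
    (ha : σ (aa φ) = τ (aa φ)) (hb : σ (bb φ) = τ (bb φ)) : σ = τ := by
  refine MulEquiv.ext fun g => ?_
  have hg : g = (⟨ofAdd (toAdd g.left), ofAdd (toAdd g.right)⟩ :
      Multiplicative (ZMod 4) ⋊[φ] Multiplicative (ZMod (2 ^ n))) := rfl
  rw [hg, apply_mk, apply_mk, ha, hb]

end Gens


section Pows

variable (hn : 2 ≤ n)
variable (φ : Multiplicative (ZMod (2 ^ n)) →* MulAut (Multiplicative (ZMod 4)))
variable (hφ : φ (Multiplicative.ofAdd (1 : ZMod (2 ^ n))) = MulEquiv.inv (Multiplicative (ZMod 4)))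
include hn hφ

lemma pow_aa_type (x : ZMod 4) {q : ZMod (2 ^ n)} (hq : q.val % 2 = 0) (k : ℕ) :
    (⟨ofAdd x, ofAdd q⟩ : Multiplicative (ZMod 4) ⋊[φ] Multiplicative (ZMod (2 ^ n))) ^ k
      = ⟨ofAdd ((k : ZMod 4) * x), ofAdd ((k : ZMod (2 ^ n)) * q)⟩ := by
  induction k with
  | zero =>
      rw [pow_zero]
      ext <;> simp
  | succ k ih =>
      rw [pow_succ, ih]
      have hpar : ((k : ZMod (2 ^ n)) * q).val % 2 = 0 := by
        rw [val_mul_parity hn, Nat.mul_mod, hq, Nat.mul_zero, Nat.zero_mod]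
      ext
      · show ofAdd ((k : ZMod 4) * x) * φ (ofAdd ((k : ZMod (2 ^ n)) * q)) (ofAdd x) = _
        rw [phi_apply_even φ hφ hpar, ← ofAdd_add]
        exact congrArg ofAdd (show (k : ZMod 4) * x + x = ((k + 1 : ℕ) : ZMod 4) * x by push_cast; ring)
      · show ofAdd ((k : ZMod (2 ^ n)) * q) * ofAdd q = _
        rw [← ofAdd_add]
        exact congrArg ofAdd (show (k : ZMod (2 ^ n)) * q + q = ((k + 1 : ℕ) : ZMod (2 ^ n)) * q by push_cast; ring)

lemma pow_bb_type (x : ZMod 4) {s : ZMod (2 ^ n)} (hs : s.val % 2 = 1) (k : ℕ) :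
    (⟨ofAdd x, ofAdd s⟩ : Multiplicative (ZMod 4) ⋊[φ] Multiplicative (ZMod (2 ^ n))) ^ k
      = ⟨ofAdd (((k % 2 : ℕ) : ZMod 4) * x), ofAdd ((k : ZMod (2 ^ n)) * s)⟩ := by
  induction k with
  | zero =>
      rw [pow_zero]
      ext <;> simp
  | succ k ih =>
      rw [pow_succ, ih]
      have hpar : ((k : ZMod (2 ^ n)) * s).val % 2 = k % 2 := by
        rw [val_mul_parity hn, Nat.mul_mod, hs, Nat.mul_one, Nat.mod_mod_of_dvd _ dvd_rfl]
      rcases Nat.even_or_odd k with hk | hk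
      · have hk2 : k % 2 = 0 := Nat.even_iff.mp hk
        have hk2' : (k + 1) % 2 = 1 := by omega
        rw [hk2] at hpar
        ext
        · show ofAdd (((k % 2 : ℕ) : ZMod 4) * x) * φ (ofAdd ((k : ZMod (2 ^ n)) * s)) (ofAdd x)
            = _
          rw [phi_apply_even φ hφ hpar, hk2, hk2', ← ofAdd_add]
          exact congrArg ofAdd (show ((0 : ℕ) : ZMod 4) * x + x = ((1 : ℕ) : ZMod 4) * x by push_cast; ring)
        · show ofAdd ((k : ZMod (2 ^ n)) * s) * ofAdd s = _
          rw [← ofAdd_add]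
          exact congrArg ofAdd (show (k : ZMod (2 ^ n)) * s + s = ((k + 1 : ℕ) : ZMod (2 ^ n)) * s by push_cast; ring)
      · have hk2 : k % 2 = 1 := Nat.odd_iff.mp hk
        have hk2' : (k + 1) % 2 = 0 := by omega
        rw [hk2] at hpar
        ext
        · show ofAdd (((k % 2 : ℕ) : ZMod 4) * x) * φ (ofAdd ((k : ZMod (2 ^ n)) * s)) (ofAdd x)
            = _
          rw [phi_apply_odd φ hφ hpar, hk2, hk2', ← ofAdd_neg, ← ofAdd_add]
          exact congrArg ofAdd (show ((1 : ℕ) : ZMod 4) * x + -x = ((0 : ℕ) : ZMod 4) * x by push_cast; ring)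
        · show ofAdd ((k : ZMod (2 ^ n)) * s) * ofAdd s = _
          rw [← ofAdd_add]
          exact congrArg ofAdd (show (k : ZMod (2 ^ n)) * s + s = ((k + 1 : ℕ) : ZMod (2 ^ n)) * s by push_cast; ring)

end Pows


lemma z4_sq : ∀ p : ZMod 4, p.val % 2 = 1 → p * p = 1 := by decide

lemma z4_parity : ∀ p : ZMod 4, p + p ≠ 0 → p.val % 2 = 1 := by decide

lemma z4_u : ∀ p r : ZMod 4, p.val % 2 = 1 → (r * p + r) + (r * p + r) = 0 := by decide

section Main

variable (hn : 2 ≤ n)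
variable (φ : Multiplicative (ZMod (2 ^ n)) →* MulAut (Multiplicative (ZMod 4)))
variable (hφ : φ (Multiplicative.ofAdd (1 : ZMod (2 ^ n))) = MulEquiv.inv (Multiplicative (ZMod 4)))
include hn hφ

lemma mk_mul (x₁ x₂ : ZMod 4) {y₁ : ZMod (2 ^ n)} (hy₁ : y₁.val % 2 = 0) (y₂ : ZMod (2 ^ n)) :
    (⟨ofAdd x₁, ofAdd y₁⟩ : Multiplicative (ZMod 4) ⋊[φ] Multiplicative (ZMod (2 ^ n)))
        * ⟨ofAdd x₂, ofAdd y₂⟩ = ⟨ofAdd (x₁ + x₂), ofAdd (y₁ + y₂)⟩ := by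
  ext
  · show ofAdd x₁ * φ (ofAdd y₁) (ofAdd x₂) = ofAdd (x₁ + x₂)
    rw [phi_apply_even φ hφ hy₁, ← ofAdd_add]
  · show ofAdd y₁ * ofAdd y₂ = ofAdd (y₁ + y₂)
    rw [← ofAdd_add]

lemma sigma_pow (σ : MulAut (Multiplicative (ZMod 4) ⋊[φ] Multiplicative (ZMod (2 ^ n)))) :
    σ ^ (2 ^ n) = 1 := by
  set p : ZMod 4 := toAdd (σ (aa φ)).left with hpdef
  set q : ZMod (2 ^ n) := toAdd (σ (aa φ)).right with hqdef
  set r : ZMod 4 := toAdd (σ (bb φ)).left with hrdef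
  set s : ZMod (2 ^ n) := toAdd (σ (bb φ)).right with hsdef
  have hA : σ (aa φ) = ⟨ofAdd p, ofAdd q⟩ := rfl
  have hB : σ (bb φ) = ⟨ofAdd r, ofAdd s⟩ := rfl
  -- the defining relation
  have hrel0 : (bb φ) * (aa φ) = (aa φ)⁻¹ * (bb φ) := by
    ext
    · show (1 : Multiplicative (ZMod 4)) * φ (ofAdd 1) (ofAdd 1) = _
      rw [hφ]
      show (1 : Multiplicative (ZMod 4)) * (ofAdd (1 : ZMod 4))⁻¹ = _
      show _ = φ ((ofAdd (0 : ZMod (2 ^ n)))⁻¹) ((ofAdd (1 : ZMod 4))⁻¹)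
        * φ ((ofAdd (0 : ZMod (2 ^ n)))⁻¹) 1
      simp
    · show ofAdd (1 : ZMod (2 ^ n)) * 1 = 1⁻¹ * ofAdd (1 : ZMod (2 ^ n))
      rw [inv_one, one_mul, mul_one]
  have hrel : σ (bb φ) * σ (aa φ) = (σ (aa φ))⁻¹ * σ (bb φ) := by
    rw [← map_mul, ← map_inv, ← map_mul, hrel0]
  rw [hA, hB] at hrel
  -- second coordinates: q + q = 0
  have hR := congrArg SemidirectProduct.right hrel
  simp only [mul_right, inv_right] at hR
  have h2q : q + q = 0 := by
    have h := congrArg toAdd hR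
    simp only [toAdd_mul, toAdd_inv, toAdd_ofAdd] at h
    linear_combination h
  have hqe : q.val % 2 = 0 := even_of_self_add hn h2q
  have hnegq : -q = q := neg_eq_of_add_eq_zero_left h2q
  -- aa * aa is not killed by σ
  have haux : p + p ≠ 0 := by
    intro hpp
    have h1 : σ (aa φ * aa φ) = 1 := by
      rw [map_mul, hA]
      ext
      · show ofAdd p * φ (ofAdd q) (ofAdd p) = (1 : Multiplicative (ZMod 4))
        rw [phi_apply_even φ hφ hqe, ← ofAdd_add, hpp]; rfl
      · show ofAdd q * ofAdd q = (1 : Multiplicative (ZMod (2 ^ n)))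
        rw [← ofAdd_add, h2q]; rfl
    have h2 : aa φ * aa φ = 1 := by
      apply σ.injective
      rw [h1, map_one]
    have h3 : aa φ * aa φ = inl (ofAdd (1 + 1 : ZMod 4)) := by
      rw [aa, ← map_mul, ← ofAdd_add]
    rw [h3] at h2
    rw [show (1 : Multiplicative (ZMod 4) ⋊[φ] Multiplicative (ZMod (2 ^ n))) = inl 1 from
      (map_one inl).symm] at h2
    have h4 : (ofAdd (1 + 1 : ZMod 4)) = 1 := inl_injective h2
    have h5 : (1 + 1 : ZMod 4) = 0 := by
      have := congrArg toAdd h4; simpa using this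
    revert h5; decide
  -- first coordinates
  have hL := congrArg SemidirectProduct.left hrel
  simp only [mul_left, inv_left, inv_right] at hL
  have hinvq : (ofAdd q)⁻¹ = ofAdd q := by rw [← ofAdd_neg, hnegq]
  rw [hinvq, phi_apply_even φ hφ hqe, phi_apply_even φ hφ hqe] at hL
  -- s must be odd
  have hs : s.val % 2 = 1 := by
    rcases Nat.even_or_odd s.val with he | ho
    · exfalso
      rw [phi_apply_even φ hφ (Nat.even_iff.mp he)] at hL
      apply haux
      have h := congrArg toAdd hL
      simp only [toAdd_mul, toAdd_inv, toAdd_ofAdd] at h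
      linear_combination h
    · exact Nat.odd_iff.mp ho
  have hp : p.val % 2 = 1 := z4_parity p haux
  -- useful ZMod facts
  have hpq : ((p.val : ZMod (2 ^ n))) * q = q := nat_mul_odd hp h2q
  have hqs : q * s = q := by
    rw [← cast_val s, mul_comm]
    exact nat_mul_odd hs h2q
  have hpar : (((r.val : ZMod (2 ^ n))) * q).val % 2 = 0 := by
    rw [val_mul_parity hn, Nat.mul_mod, hqe, Nat.mul_zero, Nat.zero_mod]
  -- σ² fixes aa
  have h2a : σ (σ (aa φ)) = aa φ := by
    conv_lhs => rw [hA]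
    rw [apply_mk φ σ p q, hA, hB,
      pow_aa_type hn φ hφ p hqe p.val,
      pow_bb_type hn φ hφ r hs q.val,
      cast_val p, z4_sq p hp, hpq, hqe, Nat.cast_zero, zero_mul, cast_val q, hqs,
      mk_mul hn φ hφ 1 0 hqe q, add_zero, h2q]
    rfl
  -- σ² on bb
  have h2b : σ (σ (bb φ)) = ⟨ofAdd (r * p + r), ofAdd (((r.val : ZMod (2 ^ n))) * q + s * s)⟩ := by
    conv_lhs => rw [hB]
    rw [apply_mk φ σ r s, hA, hB,
      pow_aa_type hn φ hφ p hqe r.val,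
      pow_bb_type hn φ hφ r hs s.val,
      cast_val r, hs, Nat.cast_one, one_mul, cast_val s,
      mk_mul hn φ hφ (r * p) r hpar (s * s)]
  set u : ZMod 4 := r * p + r with hudef
  set w : ZMod (2 ^ n) := ((r.val : ZMod (2 ^ n))) * q + s * s with hwdef
  have hu : u + u = 0 := z4_u p r hp
  have hss : (s * s).val % 2 = 1 := by
    have h := val_mul_parity hn s.val s
    rw [cast_val] at h
    rw [h, Nat.mul_mod, hs]
  have hw : w.val % 2 = 1 := by
    rw [hwdef, val_add_parity hn]
    omega
  -- τ = σ⁴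
  set ρ : MulAut (Multiplicative (ZMod 4) ⋊[φ] Multiplicative (ZMod (2 ^ n))) := σ * σ
    with hρdef
  have hρa : ρ (aa φ) = aa φ := by rw [hρdef, MulAut.mul_apply]; exact h2a
  have hρb : ρ (bb φ) = ⟨ofAdd u, ofAdd w⟩ := by rw [hρdef, MulAut.mul_apply]; exact h2b
  set τ : MulAut (Multiplicative (ZMod 4) ⋊[φ] Multiplicative (ZMod (2 ^ n))) := ρ * ρ
    with hτdef
  have hτa : τ (aa φ) = aa φ := by rw [hτdef, MulAut.mul_apply, hρa, hρa]
  have hτb : τ (bb φ) = inr (ofAdd (w * w)) := by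
    rw [hτdef, MulAut.mul_apply, hρb, apply_mk φ ρ u w, hρa, hρb, aa_pow, cast_val u,
      pow_bb_type hn φ hφ u hw w.val, hw, Nat.cast_one, one_mul, cast_val w,
      show (inl (ofAdd u) : Multiplicative (ZMod 4) ⋊[φ] Multiplicative (ZMod (2 ^ n)))
        = ⟨ofAdd u, ofAdd (0 : ZMod (2 ^ n))⟩ from rfl,
      mk_mul hn φ hφ u u (by simp) (w * w), hu, zero_add]
    rfl
  -- powers of τ
  have hv : ∀ k : ℕ, (τ ^ k) (aa φ) = aa φ ∧ (τ ^ k) (bb φ) = inr (ofAdd ((w * w) ^ k)) := by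
    intro k
    induction k with
    | zero =>
        constructor
        · rw [pow_zero, MulAut.one_apply]
        · rw [pow_zero, MulAut.one_apply, pow_zero]; rfl
    | succ k ih =>
        constructor
        · rw [pow_succ, MulAut.mul_apply, hτa, ih.1]
        · rw [pow_succ, MulAut.mul_apply, hτb,
            show (inr (ofAdd (w * w)) : Multiplicative (ZMod 4) ⋊[φ]
                Multiplicative (ZMod (2 ^ n))) = (bb φ) ^ (w * w).val from by
              rw [bb_pow, cast_val],
            map_pow, ih.2, ← map_pow, ← ofAdd_nsmul, nsmul_eq_mul, cast_val, ← pow_succ']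
  -- Euler
  have hww : (w * w) ^ 2 ^ (n - 2) = 1 := by
    have h1 : (w * w) ^ 2 ^ (n - 2) = w ^ (2 * 2 ^ (n - 2)) := by
      rw [← pow_two, ← pow_mul]
    rw [h1, show 2 * 2 ^ (n - 2) = 2 ^ (n - 1) from by rw [← pow_succ']; congr 1; omega]
    exact pow_card_units hn hw
  have h4 : τ = σ ^ 4 := by rw [hτdef, hρdef, pow_succ, pow_succ, pow_two, mul_assoc]; simp [mul_assoc]
  have hexp : (2 : ℕ) ^ n = 4 * 2 ^ (n - 2) := by
    calc (2 : ℕ) ^ n = 2 ^ (2 + (n - 2)) := by congr 1; omega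
      _ = 4 * 2 ^ (n - 2) := by rw [pow_add]; norm_num
  have hcast : σ ^ 2 ^ n = τ ^ 2 ^ (n - 2) := by
    rw [h4, ← pow_mul]
    exact congrArg (σ ^ ·) hexp
  rw [hcast]
  apply autext φ
  · rw [(hv _).1, MulAut.one_apply]
  · rw [(hv _).2, hww, MulAut.one_apply]; rfl

end Main

end Stmt9

/-- For `n ≥ 2`, the automorphism group of `C4 ⋊ C_{2^n}` (a generator of
`C_{2^n}` acting on `C4` by inversion) is a 2-group: its order is a power of 2. -/
theorem stmt9 (n : ℕ) (hn : 2 ≤ n)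
    (φ : Multiplicative (ZMod (2 ^ n)) →* MulAut (Multiplicative (ZMod 4)))
    (hφ : φ (Multiplicative.ofAdd (1 : ZMod (2 ^ n))) = MulEquiv.inv (Multiplicative (ZMod 4))) :
    ∃ k : ℕ,
      Nat.card (MulAut ((Multiplicative (ZMod 4)) ⋊[φ] (Multiplicative (ZMod (2 ^ n))))) =
        2 ^ k := by
  haveI : Fact (Nat.Prime 2) := ⟨Nat.prime_two⟩
  haveI hGfin : Finite (Multiplicative (ZMod 4) ⋊[φ] Multiplicative (ZMod (2 ^ n))) :=
    Finite.of_injective (fun g => (g.left, g.right))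
      (fun a b h => SemidirectProduct.ext (congrArg Prod.fst h) (congrArg Prod.snd h))
  haveI : Finite (MulAut (Multiplicative (ZMod 4) ⋊[φ] Multiplicative (ZMod (2 ^ n)))) :=
    Finite.of_injective
      (fun e => (e : Multiplicative (ZMod 4) ⋊[φ] Multiplicative (ZMod (2 ^ n)) →
        Multiplicative (ZMod 4) ⋊[φ] Multiplicative (ZMod (2 ^ n))))
      DFunLike.coe_injective
  exact IsPGroup.iff_card.mp (fun σ => ⟨n, Stmt9.sigma_pow hn φ hφ σ⟩)
end
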